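/- arXiv:2512.03396 — 6 statements merged into one kernel-verified Lean document; each statement's English description precedes it below -/
import Mathlib

section
/- In the Savage setting with pure risk, let ≿ be a preference relation on 𝒳 satisfying Axioms (M), (RC), (SRM), and (C), and let γ be a certainty-equivalent statistic such that X ≿ Y ⇔ γ(X_#P) ≥ γ(Y_#P) for all X, Y ∈ 𝒳(G). Then ≿ satisfies Property (WRD) — for all comonotonic X, Y ∈ 𝒳(G) with X ∼ Y and all λ ∈ [0,1], λX + (1−λ)Y ≿ X — if and only if γ is comonotonic quasiconcave. -/
open MeasureTheory Filter Topology

noncomputable section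

/-- Bounded measurable real-valued functions with respect to the σ-algebra `m`. -/
def BddMeas {Ω : Type*} (m : MeasurableSpace Ω) (X : Ω → ℝ) : Prop :=
  @Measurable Ω ℝ m _ X ∧ ∃ M : ℝ, ∀ ω, |X ω| ≤ M

/-- A capacity on a measurable space. -/
def IsCapacity {Ω : Type*} (m : MeasurableSpace Ω) (ν : Set Ω → ℝ) : Prop :=
  ν ∅ = 0 ∧ ν Set.univ = 1 ∧
    ∀ A B : Set Ω, @MeasurableSet Ω m A → @MeasurableSet Ω m B → A ⊆ B → ν A ≤ ν B

/-- A continuous capacity: continuous along increasing and decreasing sequences. -/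
def IsContinuousCapacity {Ω : Type*} (m : MeasurableSpace Ω) (ν : Set Ω → ℝ) : Prop :=
  IsCapacity m ν ∧
    (∀ A : ℕ → Set Ω, (∀ n, @MeasurableSet Ω m (A n)) → Monotone A →
      Filter.Tendsto (fun n => ν (A n)) Filter.atTop (nhds (ν (⋃ n, A n)))) ∧
    (∀ A : ℕ → Set Ω, (∀ n, @MeasurableSet Ω m (A n)) → Antitone A →
      Filter.Tendsto (fun n => ν (A n)) Filter.atTop (nhds (ν (⋂ n, A n))))

/-- Supermodularity of a capacity. -/
def Supermodular {Ω : Type*} (m : MeasurableSpace Ω) (ν : Set Ω → ℝ) : Prop :=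
  ∀ A B : Set Ω, @MeasurableSet Ω m A → @MeasurableSet Ω m B →
    ν A + ν B ≤ ν (A ∪ B) + ν (A ∩ B)

/-- A distribution: a compactly supported Borel probability measure on ℝ. -/
def IsDistribution (Q : Measure ℝ) : Prop :=
  IsProbabilityMeasure Q ∧ ∃ a b : ℝ, Q (Set.Icc a b) = 1

/-- `FSDle P Q` means `Q ≥_fsd P` (first-order stochastic dominance). -/
def FSDle (P Q : Measure ℝ) : Prop := ∀ x : ℝ, P (Set.Ioi x) ≤ Q (Set.Ioi x)

/-- Weak convergence of a sequence of Borel measures on ℝ. -/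
def WeakConv (Qn : ℕ → Measure ℝ) (Q : Measure ℝ) : Prop :=
  ∀ f : BoundedContinuousFunction ℝ ℝ,
    Filter.Tendsto (fun n => ∫ x, f x ∂(Qn n)) Filter.atTop (nhds (∫ x, f x ∂Q))

/-- A statistic: strictly fsd-monotone and compactly continuous functional on distributions. -/
def IsStatistic (γ : Measure ℝ → ℝ) : Prop :=
  (∀ Q P : Measure ℝ, IsDistribution Q → IsDistribution P → FSDle P Q → γ P ≤ γ Q) ∧
  (∀ Q P : Measure ℝ, IsDistribution Q → IsDistribution P → FSDle P Q → Q ≠ P → γ P < γ Q) ∧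
  (∀ (Qn : ℕ → Measure ℝ) (Q : Measure ℝ), (∀ n, IsDistribution (Qn n)) → IsDistribution Q →
    (∃ a b : ℝ, ∀ n, Qn n (Set.Icc a b) = 1) → WeakConv Qn Q →
    Filter.Tendsto (fun n => γ (Qn n)) Filter.atTop (nhds (γ Q)))

/-- A certainty-equivalent statistic. -/
def IsCEStatistic (γ : Measure ℝ → ℝ) : Prop :=
  IsStatistic γ ∧ ∀ c : ℝ, γ (MeasureTheory.Measure.dirac c) = c

/-- `D` is the Choquet act-to-distribution mapping associated with the capacity `ν`. -/
def IsChoquetATD {Ω : Type*} (m : MeasurableSpace Ω) (ν : Set Ω → ℝ)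
    (D : (Ω → ℝ) → Measure ℝ) : Prop :=
  ∀ X : Ω → ℝ, BddMeas m X →
    IsDistribution (D X) ∧ ∀ x : ℝ, (D X (Set.Ioi x)).toReal = ν {ω | x < X ω}

/-- The ν-quantile of `X` at level `α`. -/
def capQuantile {Ω : Type*} (ν : Set Ω → ℝ) (X : Ω → ℝ) (α : ℝ) : ℝ :=
  sInf {x : ℝ | ν {ω | x < X ω} < 1 - α}

/-- The quantile function of a distribution. -/
def distQuantile (Q : Measure ℝ) (α : ℝ) : ℝ :=
  sInf {x : ℝ | (Q (Set.Ioi x)).toReal < 1 - α}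

/-- Comonotonic pairs of functions. -/
def Comonotonic {Ω : Type*} (X Y : Ω → ℝ) : Prop :=
  ∀ s s' : Ω, 0 ≤ (X s - X s') * (Y s - Y s')

/-- Real-valued indicator function of a set. -/
def ind {Ω : Type*} (A : Set Ω) : Ω → ℝ := A.indicator fun _ => 1

/-- Atomlessness of `P` in the sense of the paper. -/
def AtomlessOn {Ω : Type*} (G : MeasurableSpace Ω) (P : @Measure Ω G) : Prop :=
  ∀ A : Set Ω, @MeasurableSet Ω G A → ∀ r : ENNReal, r ≤ P A →
    ∃ B : Set Ω, @MeasurableSet Ω G B ∧ B ⊆ A ∧ P B = r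

/-- A capacity is risk conforming if it coincides with `P` on `G`. -/
def RiskConforming {Ω : Type*} (G : MeasurableSpace Ω) (P : @Measure Ω G)
    (ν : Set Ω → ℝ) : Prop :=
  ∀ A : Set Ω, @MeasurableSet Ω G A → ν A = (P A).toReal

/-- A preference relation: a total preorder on the bounded `m`-measurable functions. -/
def TotalPreorderOn {Ω : Type*} (m : MeasurableSpace Ω)
    (pref : (Ω → ℝ) → (Ω → ℝ) → Prop) : Prop :=
  (∀ X Y, BddMeas m X → BddMeas m Y → pref X Y ∨ pref Y X) ∧
  (∀ X Y Z, BddMeas m X → BddMeas m Y → BddMeas m Z → pref X Y → pref Y Z → pref X Z)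

/-- Axiom (M): monotonicity. -/
def AxiomM {Ω : Type*} (m : MeasurableSpace Ω) (pref : (Ω → ℝ) → (Ω → ℝ) → Prop) : Prop :=
  ∀ X Y, BddMeas m X → BddMeas m Y → (∀ ω, Y ω ≤ X ω) → pref X Y

/-- Axiom (RC): risk conformity. -/
def AxiomRC {Ω : Type*} (G : MeasurableSpace Ω) (P : @Measure Ω G)
    (pref : (Ω → ℝ) → (Ω → ℝ) → Prop) : Prop :=
  ∀ X Y, BddMeas G X → BddMeas G Y →
    (∀ x : ℝ, P {ω | x < X ω} = P {ω | x < Y ω}) → pref X Y ∧ pref Y X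

/-- Axiom (SRM): strict risk monotonicity. -/
def AxiomSRM {Ω : Type*} (G : MeasurableSpace Ω) (P : @Measure Ω G)
    (pref : (Ω → ℝ) → (Ω → ℝ) → Prop) : Prop :=
  ∀ X Y, BddMeas G X → BddMeas G Y →
    P {ω | Y ω ≤ X ω} = 1 → 0 < P {ω | Y ω < X ω} → pref X Y ∧ ¬ pref Y X

/-- Axiom (C): continuity (B-closedness of upper and lower contour sets). -/
def AxiomC {Ω : Type*} (m : MeasurableSpace Ω) (pref : (Ω → ℝ) → (Ω → ℝ) → Prop) : Prop :=
  ∀ X, BddMeas m X → ∀ (Yn : ℕ → Ω → ℝ) (Y : Ω → ℝ),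
    (∀ n, BddMeas m (Yn n)) → BddMeas m Y →
    (∃ M : ℝ, ∀ n ω, |Yn n ω| ≤ M) →
    (∀ ω, Filter.Tendsto (fun n => Yn n ω) Filter.atTop (nhds (Y ω))) →
    ((∀ n, pref X (Yn n)) → pref X Y) ∧ ((∀ n, pref (Yn n) X) → pref Y X)

/-- Axiom (CD): cumulative dominance. -/
def AxiomCD {Ω : Type*} (m : MeasurableSpace Ω) (pref : (Ω → ℝ) → (Ω → ℝ) → Prop) : Prop :=
  ∀ X Y, BddMeas m X → BddMeas m Y →
    (∀ x : ℝ, pref (ind {ω | x < X ω}) (ind {ω | x < Y ω}) ∧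
       pref (ind {ω | x < Y ω}) (ind {ω | x < X ω})) →
    pref X Y ∧ pref Y X

/-- `SSDle P Q` means `Q ≥_ssd P` (second-order stochastic dominance). -/
def SSDle (P Q : Measure ℝ) : Prop :=
  ∀ f : ℝ → ℝ, Monotone f → ConcaveOn ℝ Set.univ f → ∫ x, f x ∂P ≤ ∫ x, f x ∂Q

/-- Comonotonic quasiconcavity of a statistic. -/
def ComonotonicQuasiconcave (γ : Measure ℝ → ℝ) : Prop :=
  ∀ Q P R : Measure ℝ, IsDistribution Q → IsDistribution P → IsDistribution R →
    ∀ l : ℝ, 0 ≤ l → l ≤ 1 →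
    (∀ β : ℝ, 0 < β → β < 1 →
      distQuantile R β = l * distQuantile Q β + (1 - l) * distQuantile P β) →
    min (γ Q) (γ P) ≤ γ R

/-- Exactness of a capacity. -/
def ExactCapacity {Ω : Type*} (m : MeasurableSpace Ω) (ν : Set Ω → ℝ) : Prop :=
  ∀ A : Set Ω, @MeasurableSet Ω m A →
    ∃ μ : @Measure Ω m, @IsProbabilityMeasure Ω m μ ∧
      (∀ B : Set Ω, @MeasurableSet Ω m B → ν B ≤ (μ B).toReal) ∧ (μ A).toReal = ν A


/-!
For comonotonic `X`, `Y` the upper level sets `{X > a}` and `{Y > b}` are nested, so the quantile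
function of `l X + (1 - l) Y` is `l q_X + (1 - l) q_Y`; for `X ∼ Y`, comonotonic quasiconcavity
of `γ` then gives `l X + (1 - l) Y ≿ X`.

Conversely, let `q_R = l q_Q + (1 - l) q_P'` with, say, `γ P' ≤ γ Q`. Translating `Q` to the left
by some `c ≥ 0` makes `γ` equal to `γ P'` (continuity of `γ` and intermediate values). Atomlessness
provides a uniform variable `U`, and `X = q_Q(U) - c`, `Y = q_P'(U)` are comonotonic, indifferent
acts with these laws. By (WRD), `γ P' ≤ γ(l X + (1 - l) Y)`, and `l X + (1 - l) Y = q_R(U) - l c`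
almost surely has the law `R` translated by `l c ≥ 0`, which `R` dominates.
-/

open Set

section Survival

variable {Ω : Type*} {mΩ : MeasurableSpace Ω}

def survival (μ : Measure Ω) (W : Ω → ℝ) (x : ℝ) : ℝ := μ.real {ω | x < W ω}

def quantileOf (s : ℝ → ℝ) (β : ℝ) : ℝ := sInf {x | s x < 1 - β}

theorem distQuantile_eq_quantileOf (Q : Measure ℝ) :
    distQuantile Q = quantileOf (survival Q id) := rfl

section QuantileOf

variable {s : ℝ → ℝ} {β x : ℝ}

theorem quantileOf_le (hbdd : BddBelow {x | s x < 1 - β}) (h : s x < 1 - β) :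
    quantileOf s β ≤ x :=
  csInf_le hbdd h

theorem le_quantileOf (hs : Antitone s) (hne : {x | s x < 1 - β}.Nonempty) (h : 1 - β ≤ s x) :
    x ≤ quantileOf s β :=
  le_csInf hne fun _ hy => le_of_not_gt fun hyx => (h.trans (hs hyx.le)).not_gt hy

theorem le_of_lt_quantileOf (hbdd : BddBelow {x | s x < 1 - β}) (h : x < quantileOf s β) :
    1 - β ≤ s x :=
  le_of_not_gt fun h' => (quantileOf_le hbdd h').not_gt h

theorem lt_of_quantileOf_lt (hs : Antitone s) (hne : {x | s x < 1 - β}.Nonempty)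
    (h : quantileOf s β < x) : s x < 1 - β :=
  lt_of_not_ge fun h' => (le_quantileOf hs hne h').not_gt h

end QuantileOf

variable {μ : Measure Ω} {W : Ω → ℝ} {a b x β : ℝ}

theorem survival_antitone [IsFiniteMeasure μ] (W : Ω → ℝ) : Antitone (survival μ W) :=
  fun _ _ hxy => measureReal_mono fun _ hω => lt_of_le_of_lt hxy hω

theorem survival_le_one [IsProbabilityMeasure μ] (W : Ω → ℝ) (x : ℝ) : survival μ W x ≤ 1 :=
  measureReal_le_one

theorem survival_map (μ : Measure Ω) (hW : Measurable W) :
    survival (μ.map W) id = survival μ W := by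
  funext x
  rw [survival, measureReal_def,
    Measure.map_apply hW (measurableSet_lt measurable_const measurable_id)]
  rfl

theorem distQuantile_map (μ : Measure Ω) (hW : Measurable W) :
    distQuantile (μ.map W) = quantileOf (survival μ W) := by
  rw [distQuantile_eq_quantileOf, survival_map μ hW]

theorem survival_eq_zero_of_le (hW : ∀ᵐ ω ∂μ, W ω ∈ Icc a b) (hx : b ≤ x) :
    survival μ W x = 0 := by
  have : μ {ω | x < W ω} = 0 :=
    measure_eq_zero_iff_ae_notMem.2 <| hW.mono fun _ h hω => (h.2.trans hx).not_gt hω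
  rw [survival, measureReal_def, this, ENNReal.toReal_zero]

theorem nonempty_survival_lt (hW : ∀ᵐ ω ∂μ, W ω ∈ Icc a b) (hβ : β < 1) :
    {x | survival μ W x < 1 - β}.Nonempty :=
  ⟨b, by rw [mem_ofPred_eq, survival_eq_zero_of_le hW le_rfl]; linarith⟩

variable [IsProbabilityMeasure μ]

theorem survival_eq_one_of_lt (hW : ∀ᵐ ω ∂μ, W ω ∈ Icc a b) (hx : x < a) :
    survival μ W x = 1 := by
  have : {ω | x < W ω} =ᵐ[μ] univ :=
    ae_eq_univ.2 <| measure_eq_zero_iff_ae_notMem.2 <| hW.mono fun _ h hω => hω (hx.trans_le h.1)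
  rw [survival, measureReal_def, measure_congr this, measure_univ, ENNReal.toReal_one]

theorem le_of_survival_lt (hW : ∀ᵐ ω ∂μ, W ω ∈ Icc a b) (hβ : 0 ≤ β)
    (hx : survival μ W x < 1 - β) : a ≤ x :=
  le_of_not_gt fun hxa => by rw [survival_eq_one_of_lt hW hxa] at hx; linarith

theorem bddBelow_survival_lt (hW : ∀ᵐ ω ∂μ, W ω ∈ Icc a b) (hβ : 0 ≤ β) :
    BddBelow {x | survival μ W x < 1 - β} :=
  ⟨a, fun _ => le_of_survival_lt hW hβ⟩

theorem quantileOf_survival_mem_Icc (hW : ∀ᵐ ω ∂μ, W ω ∈ Icc a b) (hβ0 : 0 ≤ β) (hβ1 : β < 1) :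
    quantileOf (survival μ W) β ∈ Icc a b :=
  ⟨le_csInf (nonempty_survival_lt hW hβ1) fun _ => le_of_survival_lt hW hβ0,
    quantileOf_le (bddBelow_survival_lt hW hβ0) <| by
      rw [survival_eq_zero_of_le hW le_rfl]; linarith⟩

theorem quantileOf_survival_mono (hW : ∀ᵐ ω ∂μ, W ω ∈ Icc a b) {β β' : ℝ} (hβ0 : 0 ≤ β)
    (hββ' : β ≤ β') (hβ'1 : β' < 1) :
    quantileOf (survival μ W) β ≤ quantileOf (survival μ W) β' :=
  csInf_le_csInf (bddBelow_survival_lt hW hβ0) (nonempty_survival_lt hW hβ'1)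
    fun _ hx => by rw [mem_ofPred_eq] at hx ⊢; linarith

end Survival

section Comonotone

variable {Ω : Type*} {mΩ : MeasurableSpace Ω} {μ : Measure Ω} {X Y : Ω → ℝ} {l : ℝ}

theorem Comonotonic.superlevel_subset_or (h : Comonotonic X Y) (a b : ℝ) :
    {ω | b < Y ω} ⊆ {ω | a < X ω} ∨ {ω | a < X ω} ⊆ {ω | b < Y ω} := by
  by_contra hc
  simp only [not_or, not_subset, mem_ofPred_eq, not_lt] at hc
  obtain ⟨⟨ω₁, hY₁, hX₁⟩, ⟨ω₂, hX₂, hY₂⟩⟩ := hc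
  nlinarith [h ω₂ ω₁]

theorem Comonotonic.survival_convexComb_le_max [IsFiniteMeasure μ] (h : Comonotonic X Y)
    (hl0 : 0 ≤ l) (hl1 : l ≤ 1) (a b : ℝ) :
    survival μ (fun ω => l * X ω + (1 - l) * Y ω) (l * a + (1 - l) * b) ≤
      max (survival μ X a) (survival μ Y b) := by
  have hsub : {ω | l * a + (1 - l) * b < l * X ω + (1 - l) * Y ω} ⊆
      {ω | a < X ω} ∪ {ω | b < Y ω} := by
    intro ω hω
    by_contra hc
    simp only [mem_union, mem_ofPred_eq, not_or, not_lt] at hω hc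
    nlinarith [mul_le_mul_of_nonneg_left hc.1 hl0,
      mul_le_mul_of_nonneg_left hc.2 (sub_nonneg.2 hl1)]
  rcases h.superlevel_subset_or a b with hYX | hXY
  · exact (measureReal_mono (hsub.trans (union_subset le_rfl hYX))).trans (le_max_left _ _)
  · exact (measureReal_mono (hsub.trans (union_subset hXY le_rfl))).trans (le_max_right _ _)

theorem Comonotonic.min_le_survival_convexComb [IsFiniteMeasure μ] (h : Comonotonic X Y)
    (hl0 : 0 ≤ l) (hl1 : l ≤ 1) (a b : ℝ) :
    min (survival μ X a) (survival μ Y b) ≤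
      survival μ (fun ω => l * X ω + (1 - l) * Y ω) (l * a + (1 - l) * b) := by
  have hsub : {ω | a < X ω} ∩ {ω | b < Y ω} ⊆
      {ω | l * a + (1 - l) * b < l * X ω + (1 - l) * Y ω} := by
    rintro ω ⟨hX, hY⟩
    simp only [mem_ofPred_eq] at hX hY ⊢
    rcases hl0.eq_or_lt with rfl | hl
    · linarith
    · nlinarith [mul_lt_mul_of_pos_left hX hl, mul_le_mul_of_nonneg_left hY.le (sub_nonneg.2 hl1)]
  rcases h.superlevel_subset_or a b with hYX | hXY
  · exact (min_le_right _ _).trans (measureReal_mono ((subset_inter hYX le_rfl).trans hsub))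
  · exact (min_le_left _ _).trans (measureReal_mono ((subset_inter le_rfl hXY).trans hsub))

theorem Comonotonic.quantileOf_survival_convexComb [IsProbabilityMeasure μ] (h : Comonotonic X Y)
    {a b : ℝ} (hX : ∀ᵐ ω ∂μ, X ω ∈ Icc a b) (hY : ∀ᵐ ω ∂μ, Y ω ∈ Icc a b) (hl0 : 0 ≤ l)
    (hl1 : l ≤ 1) {β : ℝ} (hβ0 : 0 ≤ β) (hβ1 : β < 1) :
    quantileOf (survival μ fun ω => l * X ω + (1 - l) * Y ω) β =
      l * quantileOf (survival μ X) β + (1 - l) * quantileOf (survival μ Y) β := by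
  have hZ : ∀ᵐ ω ∂μ, l * X ω + (1 - l) * Y ω ∈ Icc a b := by
    filter_upwards [hX, hY] with ω hXω hYω
    simpa only [smul_eq_mul] using
      convex_Icc a b hXω hYω hl0 (sub_nonneg.2 hl1) (add_sub_cancel l 1)
  set qX := quantileOf (survival μ X) β
  set qY := quantileOf (survival μ Y) β
  apply le_antisymm
  · refine le_of_forall_pos_le_add fun ε hε => quantileOf_le (bddBelow_survival_lt hZ hβ0) ?_
    have hXε := lt_of_quantileOf_lt (survival_antitone X) (nonempty_survival_lt hX hβ1)
      (lt_add_of_pos_right qX hε)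
    have hYε := lt_of_quantileOf_lt (survival_antitone Y) (nonempty_survival_lt hY hβ1)
      (lt_add_of_pos_right qY hε)
    have := h.survival_convexComb_le_max (μ := μ) hl0 hl1 (qX + ε) (qY + ε)
    rw [show l * (qX + ε) + (1 - l) * (qY + ε) = l * qX + (1 - l) * qY + ε by ring] at this
    exact this.trans_lt (max_lt hXε hYε)
  · refine le_of_forall_pos_le_add fun ε hε => sub_le_iff_le_add.1 <|
      le_quantileOf (survival_antitone _) (nonempty_survival_lt hZ hβ1) ?_
    have hXε := le_of_lt_quantileOf (bddBelow_survival_lt hX hβ0) (sub_lt_self qX hε)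
    have hYε := le_of_lt_quantileOf (bddBelow_survival_lt hY hβ0) (sub_lt_self qY hε)
    have := h.min_le_survival_convexComb (μ := μ) hl0 hl1 (qX - ε) (qY - ε)
    rw [show l * (qX - ε) + (1 - l) * (qY - ε) = l * qX + (1 - l) * qY - ε by ring] at this
    exact (le_min hXε hYε).trans this

end Comonotone

section Backward

variable {Ω : Type*} {mΩ : MeasurableSpace Ω}

/-- Property (WRD) of the paper. -/
def WeakRiskDiversification (m : MeasurableSpace Ω) (pref : (Ω → ℝ) → (Ω → ℝ) → Prop) : Prop :=
  ∀ X Y : Ω → ℝ, BddMeas m X → BddMeas m Y → Comonotonic X Y → pref X Y → pref Y X →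
    ∀ l : ℝ, 0 ≤ l → l ≤ 1 → pref (fun ω => l * X ω + (1 - l) * Y ω) X

theorem BddMeas.convexComb {X Y : Ω → ℝ} (hX : BddMeas mΩ X) (hY : BddMeas mΩ Y) (l : ℝ) :
    BddMeas mΩ fun ω => l * X ω + (1 - l) * Y ω := by
  obtain ⟨hXm, MX, hMX⟩ := hX
  obtain ⟨hYm, MY, hMY⟩ := hY
  refine ⟨(hXm.const_mul l).add (hYm.const_mul (1 - l)), |l| * MX + |1 - l| * MY, fun ω => ?_⟩
  calc |l * X ω + (1 - l) * Y ω| ≤ |l| * |X ω| + |1 - l| * |Y ω| := by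
        simpa only [abs_mul] using abs_add_le (l * X ω) ((1 - l) * Y ω)
    _ ≤ |l| * MX + |1 - l| * MY := by gcongr <;> simp only [hMX, hMY]

theorem ae_mem_Icc_of_abs_le (μ : Measure Ω) {W : Ω → ℝ} {M M' : ℝ} (h : ∀ ω, |W ω| ≤ M)
    (hM : M ≤ M') : ∀ᵐ ω ∂μ, W ω ∈ Icc (-M') M' :=
  ae_of_all μ fun ω => abs_le.1 ((h ω).trans hM)

theorem isDistribution_map (μ : Measure Ω) [IsProbabilityMeasure μ] {W : Ω → ℝ}
    (hW : BddMeas mΩ W) : IsDistribution (μ.map W) := by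
  obtain ⟨hWm, M, hM⟩ := hW
  refine ⟨Measure.isProbabilityMeasure_map hWm.aemeasurable, -M, M, ?_⟩
  rw [Measure.map_apply hWm measurableSet_Icc, ← measure_univ (μ := μ)]
  exact congrArg μ (eq_univ_of_forall fun ω => abs_le.1 (hM ω))

theorem wrd_of_comonotonicQuasiconcave (P : Measure Ω) [IsProbabilityMeasure P]
    {pref : (Ω → ℝ) → (Ω → ℝ) → Prop} {γ : Measure ℝ → ℝ}
    (hrep : ∀ X Y : Ω → ℝ, BddMeas mΩ X → BddMeas mΩ Y →
      (pref X Y ↔ γ (P.map Y) ≤ γ (P.map X)))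
    (hγ : ComonotonicQuasiconcave γ) : WeakRiskDiversification mΩ pref := by
  intro X Y hX hY hXY hXpY hYpX l hl0 hl1
  have hZ := hX.convexComb hY l
  obtain ⟨MX, hMX⟩ := hX.2
  obtain ⟨MY, hMY⟩ := hY.2
  have hγXY : γ (P.map X) = γ (P.map Y) :=
    le_antisymm ((hrep Y X hY hX).1 hYpX) ((hrep X Y hX hY).1 hXpY)
  have hquant : ∀ β : ℝ, 0 < β → β < 1 →
      distQuantile (P.map fun ω => l * X ω + (1 - l) * Y ω) β =
        l * distQuantile (P.map X) β + (1 - l) * distQuantile (P.map Y) β := by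
    intro β hβ0 hβ1
    rw [distQuantile_map P hX.1, distQuantile_map P hY.1, distQuantile_map P hZ.1]
    exact hXY.quantileOf_survival_convexComb (ae_mem_Icc_of_abs_le P hMX (le_max_left MX MY))
      (ae_mem_Icc_of_abs_le P hMY (le_max_right MX MY)) hl0 hl1 hβ0.le hβ1
  have := hγ _ _ _ (isDistribution_map P hX) (isDistribution_map P hY) (isDistribution_map P hZ)
    l hl0 hl1 hquant
  rw [← hγXY, min_self] at this
  exact (hrep _ X hZ hX).2 this

end Backward

section Shift

variable {Q : Measure ℝ} {a b : ℝ}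

theorem measure_Icc_eq_one_of_le [IsProbabilityMeasure Q] (h : Q (Icc a b) = 1) {a' b' : ℝ}
    (ha : a' ≤ a) (hb : b ≤ b') : Q (Icc a' b') = 1 :=
  le_antisymm prob_le_one (h ▸ measure_mono (Icc_subset_Icc ha hb))

theorem measure_Ioi_eq_zero_of_le [IsProbabilityMeasure Q] (h : Q (Icc a b) = 1) {x : ℝ}
    (hx : b ≤ x) : Q (Ioi x) = 0 :=
  measure_mono_null (fun _ hy (hy' : _ ∈ Icc a b) => (hy'.2.trans hx).not_gt hy)
    ((prob_compl_eq_zero_iff measurableSet_Icc).2 h)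

theorem measure_Ioi_eq_one_of_lt [IsProbabilityMeasure Q] (h : Q (Icc a b) = 1) {x : ℝ}
    (hx : x < a) : Q (Ioi x) = 1 :=
  le_antisymm prob_le_one (h ▸ measure_mono fun _ hy => hx.trans_le hy.1)

theorem ae_mem_Icc_of_measure_eq_one [IsProbabilityMeasure Q] (h : Q (Icc a b) = 1) :
    ∀ᵐ y ∂Q, y ∈ Icc a b :=
  (ae_iff_measure_eq measurableSet_Icc.nullMeasurableSet).2 (h.trans measure_univ.symm)

theorem map_sub_const_apply_Ioi (Q : Measure ℝ) (c x : ℝ) :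
    Q.map (· - c) (Ioi x) = Q (Ioi (x + c)) := by
  rw [Measure.map_apply (measurable_sub_const c) measurableSet_Ioi, preimage_sub_const_Ioi]

theorem map_sub_const_apply_Icc (Q : Measure ℝ) (c : ℝ) :
    Q.map (· - c) (Icc a b) = Q (Icc (a + c) (b + c)) := by
  rw [Measure.map_apply (measurable_sub_const c) measurableSet_Icc, preimage_sub_const_Icc]

theorem IsDistribution.map_sub_const (hQ : IsDistribution Q) (c : ℝ) :
    IsDistribution (Q.map (· - c)) := by
  obtain ⟨hQp, a, b, hab⟩ := hQ
  refine ⟨Measure.isProbabilityMeasure_map (measurable_sub_const c).aemeasurable, a - c, b - c, ?_⟩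
  rwa [map_sub_const_apply_Icc, sub_add_cancel, sub_add_cancel]

theorem fsdLe_map_sub_const {c : ℝ} (hc : 0 ≤ c) : FSDle (Q.map (· - c)) Q := fun x => by
  rw [map_sub_const_apply_Ioi]
  exact measure_mono (Ioi_subset_Ioi (le_add_of_nonneg_right hc))

theorem IsStatistic.continuous_map_sub_const {γ : Measure ℝ → ℝ} (hγ : IsStatistic γ)
    (hQ : IsDistribution Q) : Continuous fun c => γ (Q.map (· - c)) := by
  obtain ⟨hQp, a, b, hab⟩ := hQ
  refine continuous_iff_seqContinuous.2 fun u c hu => ?_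
  obtain ⟨K, hK⟩ := isBounded_iff_forall_norm_le.1 (Metric.isBounded_range_of_tendsto u hu)
  refine hγ.2.2 _ _ (fun n => IsDistribution.map_sub_const ⟨hQp, a, b, hab⟩ (u n))
    (IsDistribution.map_sub_const ⟨hQp, a, b, hab⟩ c) ⟨a - K, b + K, fun n => ?_⟩ fun f => ?_
  · have := abs_le.1 (hK _ (mem_range_self n))
    rw [map_sub_const_apply_Icc]
    exact measure_Icc_eq_one_of_le hab (by linarith) (by linarith)
  · simp_rw [integral_map (measurable_sub_const _).aemeasurable
      f.continuous.aestronglyMeasurable]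
    refine tendsto_integral_of_dominated_convergence (fun _ => ‖f‖)
      (fun n => (f.continuous.comp (continuous_sub_right (u n))).aestronglyMeasurable)
      (integrable_const _) (fun n => ae_of_all _ fun x => f.norm_coe_le_norm _)
      (ae_of_all _ fun x => (f.continuous.tendsto _).comp (tendsto_const_nhds.sub hu))

/-- Translating `Q` by `max 0 (bQ - aP)` already puts it below `P'` in the stochastic order;
conclude by intermediate values. -/
theorem IsStatistic.exists_map_sub_const_eq {γ : Measure ℝ → ℝ} (hγ : IsStatistic γ)
    {P' : Measure ℝ} (hQ : IsDistribution Q) (hP' : IsDistribution P') (hle : γ P' ≤ γ Q) :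
    ∃ c, 0 ≤ c ∧ γ (Q.map (· - c)) = γ P' := by
  obtain ⟨hQp, aQ, bQ, habQ⟩ := hQ
  obtain ⟨hPp, aP, bP, habP⟩ := hP'
  set C := max 0 (bQ - aP)
  have hC : γ (Q.map (· - C)) ≤ γ P' := by
    refine hγ.1 _ _ ⟨hPp, aP, bP, habP⟩ (IsDistribution.map_sub_const ⟨hQp, aQ, bQ, habQ⟩ C)
      fun x => ?_
    rw [map_sub_const_apply_Ioi]
    rcases lt_or_ge x aP with hx | hx
    · exact prob_le_one.trans (measure_Ioi_eq_one_of_lt habP hx).ge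
    · rw [measure_Ioi_eq_zero_of_le habQ (by linarith [le_max_right 0 (bQ - aP)])]
      exact zero_le
  have h0 : γ (Q.map (· - 0)) = γ Q := by simp
  obtain ⟨c, hc, hγc⟩ := intermediate_value_Icc' (le_max_left 0 (bQ - aP))
    (hγ.continuous_map_sub_const ⟨hQp, aQ, bQ, habQ⟩).continuousOn ⟨hC, h0 ▸ hle⟩
  exact ⟨c, hc.1, hγc⟩

end Shift

section Chain

open Function

variable {Ω : Type*} {mΩ : MeasurableSpace Ω} {P : Measure Ω}

theorem AtomlessOn.exists_subset_superset_measure_eq [IsFiniteMeasure P]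
    (hatom : AtomlessOn mΩ P) {A B : Set Ω} (hA : MeasurableSet A) (hB : MeasurableSet B)
    (hAB : A ⊆ B) {r : ENNReal} (hAr : P A ≤ r) (hrB : r ≤ P B) :
    ∃ C, MeasurableSet C ∧ A ⊆ C ∧ C ⊆ B ∧ P C = r := by
  have hr : r - P A ≤ P (B \ A) := by
    rw [measure_sdiff hAB hA.nullMeasurableSet (measure_ne_top P A)]
    exact tsub_le_tsub_right hrB _
  obtain ⟨D, hD, hDBA, hPD⟩ := hatom (B \ A) (hB.diff hA) _ hr
  refine ⟨A ∪ D, hA.union hD, subset_union_left, union_subset hAB (hDBA.trans sdiff_subset), ?_⟩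
  rw [measure_union (disjoint_left.2 fun _ hωA hωD => (hDBA hωD).2 hωA) hD, hPD,
    add_tsub_cancel_of_le hAr]

variable {ι : Type*} [LinearOrder ι] {τ : ι → ENNReal} {e : ℕ → ι} {n : ℕ} {f : ℕ → Set Ω}

def IsPartialChain (P : Measure Ω) (τ : ι → ENNReal) (e : ℕ → ι) (n : ℕ) (f : ℕ → Set Ω) :
    Prop :=
  ∀ i < n, MeasurableSet (f i) ∧ P (f i) = τ (e i) ∧ ∀ j < n, e j ≤ e i → f j ⊆ f i

theorem IsPartialChain.exists_lower (hf : IsPartialChain P τ e n f) (hτ : Monotone τ) (q : ι) :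
    ∃ A, MeasurableSet A ∧ P A ≤ τ q ∧ ∀ j < n, (e j ≤ q → f j ⊆ A) ∧ (q ≤ e j → A ⊆ f j) := by
  by_cases hne : ((Finset.range n).filter fun j => e j ≤ q).Nonempty
  · obtain ⟨m, hm, hmax⟩ := Finset.exists_max_image _ e hne
    simp only [Finset.mem_filter, Finset.mem_range] at hm hmax
    obtain ⟨hmeas, hPm, -⟩ := hf m hm.1
    refine ⟨f m, hmeas, hPm ▸ hτ hm.2, fun j hj => ⟨fun hjq => ?_, fun hqj => ?_⟩⟩
    · exact (hf m hm.1).2.2 j hj (hmax j ⟨hj, hjq⟩)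
    · exact (hf j hj).2.2 m hm.1 (hm.2.trans hqj)
  · simp only [Finset.not_nonempty_iff_eq_empty, Finset.filter_eq_empty_iff, Finset.mem_range]
      at hne
    exact ⟨∅, MeasurableSet.empty, by simp, fun j hj => ⟨fun hjq => (hne hj hjq).elim,
      fun _ => empty_subset _⟩⟩

theorem IsPartialChain.exists_upper (hf : IsPartialChain P τ e n f) (hτ : Monotone τ)
    (hτP : ∀ i, τ i ≤ P univ) (q : ι) :
    ∃ B, MeasurableSet B ∧ τ q ≤ P B ∧ ∀ j < n, (e j ≤ q → f j ⊆ B) ∧ (q ≤ e j → B ⊆ f j) := by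
  by_cases hne : ((Finset.range n).filter fun j => q ≤ e j).Nonempty
  · obtain ⟨m, hm, hmin⟩ := Finset.exists_min_image _ e hne
    simp only [Finset.mem_filter, Finset.mem_range] at hm hmin
    obtain ⟨hmeas, hPm, -⟩ := hf m hm.1
    refine ⟨f m, hmeas, hPm ▸ hτ hm.2, fun j hj => ⟨fun hjq => ?_, fun hqj => ?_⟩⟩
    · exact (hf m hm.1).2.2 j hj (hjq.trans hm.2)
    · exact (hf j hj).2.2 m hm.1 (hmin j ⟨hj, hqj⟩)
  · simp only [Finset.not_nonempty_iff_eq_empty, Finset.filter_eq_empty_iff, Finset.mem_range]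
      at hne
    exact ⟨univ, MeasurableSet.univ, hτP q, fun j hj => ⟨fun _ => subset_univ _,
      fun hqj => (hne hj hqj).elim⟩⟩

theorem IsPartialChain.succ_of_between (hf : IsPartialChain P τ e n f) {C : Set Ω}
    (hC : MeasurableSet C) (hPC : P C = τ (e n)) (hlo : ∀ j < n, e j ≤ e n → f j ⊆ C)
    (hhi : ∀ j < n, e n ≤ e j → C ⊆ f j) : IsPartialChain P τ e (n + 1) (update f n C) := by
  intro i hi
  rcases (Nat.lt_succ_iff_lt_or_eq.1 hi).symm with rfl | hin
  · refine ⟨by simpa using hC, by simpa using hPC, fun j hj hji => ?_⟩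
    rcases (Nat.lt_succ_iff_lt_or_eq.1 hj).symm with rfl | hjn
    · exact subset_rfl
    · simpa [update_of_ne hjn.ne] using hlo j hjn hji
  · obtain ⟨hmeas, hP, hsub⟩ := hf i hin
    refine ⟨by simpa [update_of_ne hin.ne] using hmeas, by simpa [update_of_ne hin.ne] using hP,
      fun j hj hji => ?_⟩
    rcases (Nat.lt_succ_iff_lt_or_eq.1 hj).symm with rfl | hjn
    · simpa [update_of_ne hin.ne] using hhi i hin hji
    · simpa [update_of_ne hin.ne, update_of_ne hjn.ne] using hsub j hjn hji

theorem IsPartialChain.exists_update [IsFiniteMeasure P] (hf : IsPartialChain P τ e n f)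
    (hatom : AtomlessOn mΩ P) (hτ : Monotone τ) (hτP : ∀ i, τ i ≤ P univ) :
    ∃ C, IsPartialChain P τ e (n + 1) (update f n C) := by
  obtain ⟨A, hA, hPA, hAf⟩ := hf.exists_lower hτ (e n)
  obtain ⟨B, hB, hPB, hBf⟩ := hf.exists_upper hτ hτP (e n)
  obtain ⟨C, hC, hAC, hCB, hPC⟩ := hatom.exists_subset_superset_measure_eq (hA.inter hB) hB
    inter_subset_right ((measure_mono inter_subset_left).trans hPA) hPB
  exact ⟨C, hf.succ_of_between hC hPC
    (fun j hj hje => (subset_inter ((hAf j hj).1 hje) ((hBf j hj).1 hje)).trans hAC)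
    (fun j hj hje => hCB.trans ((hBf j hj).2 hje))⟩

def partialChain [IsFiniteMeasure P] (hatom : AtomlessOn mΩ P) (hτ : Monotone τ)
    (hτP : ∀ i, τ i ≤ P univ) (e : ℕ → ι) : (n : ℕ) → {f : ℕ → Set Ω // IsPartialChain P τ e n f}
  | 0 => ⟨fun _ => ∅, fun _ hi => absurd hi (Nat.not_lt_zero _)⟩
  | n + 1 =>
    ⟨update (partialChain hatom hτ hτP e n).1 n
        (IsPartialChain.exists_update (partialChain hatom hτ hτP e n).2 hatom hτ hτP).choose,
      (IsPartialChain.exists_update (partialChain hatom hτ hτP e n).2 hatom hτ hτP).choose_spec⟩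

theorem partialChain_apply_of_lt [IsFiniteMeasure P] (hatom : AtomlessOn mΩ P) (hτ : Monotone τ)
    (hτP : ∀ i, τ i ≤ P univ) (e : ℕ → ι) {i n : ℕ} (hin : i < n) :
    (partialChain hatom hτ hτP e n).1 i = (partialChain hatom hτ hτP e (i + 1)).1 i := by
  induction n with
  | zero => exact absurd hin (Nat.not_lt_zero i)
  | succ n ih =>
    rcases (Nat.lt_succ_iff_lt_or_eq.1 hin).symm with rfl | hin
    · rfl
    · exact (update_of_ne hin.ne _ _).trans (ih hin)

theorem AtomlessOn.exists_monotone_measure_eq [IsFiniteMeasure P] [Countable ι] [Nonempty ι]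
    (hatom : AtomlessOn mΩ P) (hτ : Monotone τ) (hτP : ∀ i, τ i ≤ P univ) :
    ∃ c : ι → Set Ω, (∀ i, MeasurableSet (c i)) ∧ Monotone c ∧ ∀ i, P (c i) = τ i := by
  obtain ⟨e, he⟩ := exists_surjective_nat ι
  set F := partialChain hatom hτ hτP e
  have hF : ∀ i, MeasurableSet ((F (i + 1)).1 i) ∧ P ((F (i + 1)).1 i) = τ (e i) :=
    fun i => ((F (i + 1)).2 i i.lt_succ_self).imp_right And.left
  have hmono : ∀ i j, e j ≤ e i → (F (j + 1)).1 j ⊆ (F (i + 1)).1 i := fun i j hji => by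
    have := ((F (max i j + 1)).2 i (by omega)).2.2 j (by omega) hji
    rwa [partialChain_apply_of_lt hatom hτ hτP e (by omega : i < max i j + 1),
      partialChain_apply_of_lt hatom hτ hτP e (by omega : j < max i j + 1)] at this
  choose k hk using he
  refine ⟨fun q => (F (k q + 1)).1 (k q), fun q => (hF _).1, fun q r hqr => hmono _ _ ?_,
    fun q => (hF _).2.trans (by rw [hk])⟩
  rwa [hk, hk]

end Chain

section Uniform

variable {Ω : Type*} {mΩ : MeasurableSpace Ω} {P : Measure Ω} {U : Ω → ℝ}

structure IsUnitUniform (P : Measure Ω) (U : Ω → ℝ) : Prop where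
  measurable : Measurable U
  mem_Icc : ∀ ω, U ω ∈ Icc (0 : ℝ) 1
  measure_lt : ∀ t ∈ Icc (0 : ℝ) 1, P {ω | U ω < t} = ENNReal.ofReal t

variable [IsProbabilityMeasure P]

theorem IsUnitUniform.measure_le (hU : IsUnitUniform P U) {t : ℝ} (ht : t ∈ Icc (0 : ℝ) 1) :
    P {ω | U ω ≤ t} = ENNReal.ofReal t := by
  refine le_antisymm ?_ ((hU.measure_lt t ht).symm.le.trans
    (measure_mono fun ω (hω : U ω < t) => hω.le))
  by_contra! h
  rw [ENNReal.ofReal_lt_iff_lt_toReal ht.1 (measure_ne_top _ _)] at h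
  obtain ⟨s, hts, hs⟩ := exists_between h
  have hs0 : 0 ≤ s := ht.1.trans hts.le
  have hle : P {ω | U ω ≤ t} ≤ ENNReal.ofReal s := by
    rw [← hU.measure_lt s ⟨hs0, hs.le.trans measureReal_le_one⟩]
    exact measure_mono fun ω (hω : U ω ≤ t) => hω.trans_lt hts
  have := (ENNReal.toReal_le_toReal (measure_ne_top _ _) ENNReal.ofReal_ne_top).2 hle
  rw [ENNReal.toReal_ofReal hs0] at this
  linarith

theorem IsUnitUniform.measure_gt (hU : IsUnitUniform P U) {t : ℝ} (ht : t ∈ Icc (0 : ℝ) 1) :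
    P {ω | t < U ω} = ENNReal.ofReal (1 - t) := by
  have : {ω | t < U ω} = {ω | U ω ≤ t}ᶜ := by ext; simp [not_le]
  rw [this, prob_compl_eq_one_sub (measurableSet_le hU.measurable measurable_const),
    hU.measure_le ht, ← ENNReal.ofReal_one, ENNReal.ofReal_sub _ ht.1]

theorem IsUnitUniform.measure_ge (hU : IsUnitUniform P U) {t : ℝ} (ht : t ∈ Icc (0 : ℝ) 1) :
    P {ω | t ≤ U ω} = ENNReal.ofReal (1 - t) := by
  have : {ω | t ≤ U ω} = {ω | U ω < t}ᶜ := by ext; simp [not_lt]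
  rw [this, prob_compl_eq_one_sub (measurableSet_lt hU.measurable measurable_const),
    hU.measure_lt t ht, ← ENNReal.ofReal_one, ENNReal.ofReal_sub _ ht.1]

theorem IsUnitUniform.ae_mem_Ioo (hU : IsUnitUniform P U) : ∀ᵐ ω ∂P, U ω ∈ Ioo 0 1 := by
  have h0 := hU.measure_le (t := 0) ⟨le_rfl, zero_le_one⟩
  have h1 := hU.measure_ge (t := 1) ⟨zero_le_one, le_rfl⟩
  rw [ENNReal.ofReal_zero] at h0
  rw [sub_self, ENNReal.ofReal_zero] at h1
  filter_upwards [measure_eq_zero_iff_ae_notMem.1 h0, measure_eq_zero_iff_ae_notMem.1 h1]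
    with ω hω0 hω1
  exact ⟨lt_of_not_ge hω0, lt_of_not_ge hω1⟩

theorem iSup_rat_lt_min_ofReal {t : ℝ} (ht : t ∈ Icc (0 : ℝ) 1) :
    ⨆ q : {q : ℚ // (q : ℝ) < t}, min (ENNReal.ofReal q) 1 = ENNReal.ofReal t := by
  refine le_antisymm (iSup_le fun q => (min_le_left _ _).trans (ENNReal.ofReal_le_ofReal q.2.le))
    (le_of_forall_lt fun x hx => ?_)
  have hxt : x.toReal < t := (ENNReal.lt_ofReal_iff_toReal_lt hx.ne_top).1 hx
  obtain ⟨q, hxq, hqt⟩ := exists_rat_btwn hxt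
  refine lt_of_lt_of_le (lt_min ((ENNReal.lt_ofReal_iff_toReal_lt hx.ne_top).2 hxq) ?_)
    (le_iSup (fun q : {q : ℚ // (q : ℝ) < t} => min (ENNReal.ofReal q) 1) ⟨q, hqt⟩)
  exact hx.trans_le (ENNReal.ofReal_le_one.2 ht.2)

theorem AtomlessOn.exists_rat_chain (hatom : AtomlessOn mΩ P) :
    ∃ c : ℚ → Set Ω, (∀ q, MeasurableSet (c q)) ∧ Monotone c ∧
      (∀ q, P (c q) = min (ENNReal.ofReal q) 1) ∧ (∀ q < 0, c q = ∅) ∧ c 1 = univ := by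
  obtain ⟨c, hcm, hcmono, hcP⟩ := hatom.exists_monotone_measure_eq
    (τ := fun q : ℚ => min (ENNReal.ofReal q) 1)
    (fun q r h => min_le_min_right _ (ENNReal.ofReal_le_ofReal (Rat.cast_le.2 h)))
    (fun q => measure_univ (μ := P) ▸ min_le_right _ _)
  refine ⟨fun q => if q < 0 then ∅ else if 1 ≤ q then univ else c q, fun q => ?_,
    fun q r hqr => ?_, fun q => ?_, fun q hq => if_pos hq, by simp⟩
  · simp only
    split_ifs <;> simp [hcm]
  · simp only
    split_ifs <;> first | exact empty_subset _ | exact subset_univ _ | exact hcmono hqr | linarith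
  · simp only
    split_ifs with h0 h1
    · simp [ENNReal.ofReal_of_nonpos (Rat.cast_nonpos.2 h0.le)]
    · have : (1 : ℝ) ≤ q := by exact_mod_cast h1
      simp [this]
    · exact hcP q

/-- `U ω = inf {q | ω ∈ c q}` for a chain `c` as in `AtomlessOn.exists_rat_chain`. -/
theorem AtomlessOn.exists_isUnitUniform (hatom : AtomlessOn mΩ P) : ∃ U, IsUnitUniform P U := by
  obtain ⟨c, hcm, hcmono, hcP, hc0, hc1⟩ := hatom.exists_rat_chain
  have hnonneg : ∀ q ω, ω ∈ c q → (0 : ℝ) ≤ q := fun q ω hω => by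
    by_contra! h
    simp [hc0 q (Rat.cast_lt_zero.1 h)] at hω
  set S : Ω → Set ℝ := fun ω => ((↑) : ℚ → ℝ) '' {q | ω ∈ c q}
  have hS1 : ∀ ω, (1 : ℝ) ∈ S ω := fun ω => ⟨1, by simp [hc1], Rat.cast_one⟩
  have hSbdd : ∀ ω, BddBelow (S ω) := fun ω => ⟨0, by rintro _ ⟨q, hq, rfl⟩; exact hnonneg q ω hq⟩
  have hlev : ∀ t, {ω | sInf (S ω) < t} = ⋃ q : {q : ℚ // (q : ℝ) < t}, c q := fun t => by
    ext ω
    simp only [mem_ofPred_eq, mem_iUnion, csInf_lt_iff (hSbdd ω) ⟨1, hS1 ω⟩]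
    constructor
    · rintro ⟨_, ⟨q, hq, rfl⟩, hqt⟩
      exact ⟨⟨q, hqt⟩, hq⟩
    · rintro ⟨⟨q, hqt⟩, hq⟩
      exact ⟨q, ⟨q, hq, rfl⟩, hqt⟩
  refine ⟨fun ω => sInf (S ω), measurable_of_Iio fun t => ?_, fun ω => ⟨?_, ?_⟩, fun t ht => ?_⟩
  · change MeasurableSet {ω | sInf (S ω) < t}
    exact (hlev t).symm ▸ MeasurableSet.iUnion fun q => hcm q
  · exact le_csInf ⟨1, hS1 ω⟩ fun _ ⟨q, hq, hqx⟩ => hqx ▸ hnonneg q ω hq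
  · exact csInf_le (hSbdd ω) (hS1 ω)
  · rw [hlev t, Monotone.measure_iUnion (s := fun q : {q : ℚ // (q : ℝ) < t} => c q)
      fun q r h => hcmono h]
    simp_rw [hcP]
    exact iSup_rat_lt_min_ofReal ht

end Uniform

section InverseTransform

open ProbabilityTheory

variable {Q : Measure ℝ} {a b : ℝ}

theorem MeasureTheory.Measure.ext_of_Ioi {μ ν : Measure ℝ} [IsProbabilityMeasure μ]
    [IsProbabilityMeasure ν] (h : ∀ x, μ (Ioi x) = ν (Ioi x)) : μ = ν :=
  Measure.ext_of_Iic μ ν fun x => by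
    rw [← compl_Ioi, prob_compl_eq_one_sub measurableSet_Ioi,
      prob_compl_eq_one_sub measurableSet_Ioi, h]

theorem continuousWithinAt_survival_id (Q : Measure ℝ) [IsProbabilityMeasure Q] (x : ℝ) :
    ContinuousWithinAt (survival Q id) (Ioi x) x := by
  have : survival Q id = fun y => 1 - cdf Q y := funext fun y => by
    rw [cdf_eq_real, ← probReal_compl_eq_one_sub measurableSet_Iic, compl_Iic]
    rfl
  rw [this]
  exact (continuousWithinAt_const.sub ((cdf Q).right_continuous x)).mono Ioi_subset_Ici_self

/-- `distQuantile Q 1 = sInf ∅ = 0`, so the quantile function is cut off at `1` to keep it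
monotone. -/
def quantileExt (Q : Measure ℝ) (b u : ℝ) : ℝ := if u < 1 then distQuantile Q (max u 0) else b

theorem quantileExt_of_mem_Ioo {u : ℝ} (hu : u ∈ Ioo 0 1) :
    quantileExt Q b u = distQuantile Q u := by
  rw [quantileExt, if_pos hu.2, max_eq_left hu.1.le]

variable [IsProbabilityMeasure Q]

theorem quantileExt_mem_Icc (hQ : ∀ᵐ y ∂Q, y ∈ Icc a b) (u : ℝ) : quantileExt Q b u ∈ Icc a b := by
  unfold quantileExt
  split_ifs with hu
  · exact quantileOf_survival_mem_Icc hQ (le_max_right u 0) (max_lt hu one_pos)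
  · obtain ⟨y, hy⟩ := hQ.exists
    exact ⟨hy.1.trans hy.2, le_rfl⟩

theorem monotone_quantileExt (hQ : ∀ᵐ y ∂Q, y ∈ Icc a b) : Monotone (quantileExt Q b) := by
  intro u v huv
  by_cases hv : v < 1
  · rw [quantileExt, quantileExt, if_pos (huv.trans_lt hv), if_pos hv]
    exact quantileOf_survival_mono hQ (le_max_right u 0) (max_le_max_right 0 huv)
      (max_lt hv one_pos)
  · calc quantileExt Q b u ≤ b := (quantileExt_mem_Icc hQ u).2
      _ = quantileExt Q b v := (if_neg hv).symm

theorem map_quantileExt_comp {Ω : Type*} {mΩ : MeasurableSpace Ω} {P : Measure Ω}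
    [IsProbabilityMeasure P] {U : Ω → ℝ} (hU : IsUnitUniform P U) (hQ : ∀ᵐ y ∂Q, y ∈ Icc a b) :
    P.map (fun ω => quantileExt Q b (U ω)) = Q := by
  have hm : Measurable fun ω => quantileExt Q b (U ω) :=
    (monotone_quantileExt hQ).measurable.comp hU.measurable
  have := Measure.isProbabilityMeasure_map (μ := P) hm.aemeasurable
  refine Measure.ext_of_Ioi fun x => ?_
  rw [Measure.map_apply hm measurableSet_Ioi]
  have hs : survival Q id x ∈ Icc (0 : ℝ) 1 := ⟨measureReal_nonneg, survival_le_one id x⟩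
  have hF : 1 - survival Q id x ∈ Icc (0 : ℝ) 1 := ⟨by linarith [hs.2], by linarith [hs.1]⟩
  have hQx : Q (Ioi x) = ENNReal.ofReal (1 - (1 - survival Q id x)) := by
    rw [sub_sub_cancel]
    exact (ENNReal.ofReal_toReal (measure_ne_top _ _)).symm
  apply le_antisymm
  · refine (measure_mono_ae (hU.ae_mem_Ioo.mono
      fun ω hω (h : x < quantileExt Q b (U ω)) => ?_)).trans ((hU.measure_ge hF).trans hQx.symm).le
    rw [quantileExt_of_mem_Ioo hω, distQuantile_eq_quantileOf] at h
    have := le_of_lt_quantileOf (bddBelow_survival_lt (W := id) hQ hω.1.le) h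
    change 1 - survival Q id x ≤ U ω
    linarith
  · refine hQx.trans_le ((hU.measure_gt hF).symm.trans_le
      (measure_mono_ae (hU.ae_mem_Ioo.mono fun ω hω (h : 1 - survival Q id x < U ω) => ?_)))
    obtain ⟨x', hxx', hx'⟩ := (((continuousWithinAt_survival_id Q x).eventually
      (lt_mem_nhds (show 1 - U ω < survival Q id x by linarith))).and
        self_mem_nhdsWithin).exists
    change x < quantileExt Q b (U ω)
    rw [quantileExt_of_mem_Ioo hω, distQuantile_eq_quantileOf]
    exact hx'.trans_le (le_quantileOf (survival_antitone id) (nonempty_survival_lt hQ hω.2) hxx'.le)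

end InverseTransform

section Forward

variable {Ω : Type*} {mΩ : MeasurableSpace Ω}

theorem Monotone.comonotonic_comp {f g : ℝ → ℝ} (hf : Monotone f) (hg : Monotone g) (U : Ω → ℝ) :
    Comonotonic (fun ω => f (U ω)) (fun ω => g (U ω)) := fun s s' => by
  rcases le_total (U s) (U s') with h | h
  · exact mul_nonneg_of_nonpos_of_nonpos (sub_nonpos.2 (hf h)) (sub_nonpos.2 (hg h))
  · exact mul_nonneg (sub_nonneg.2 (hf h)) (sub_nonneg.2 (hg h))

theorem bddMeas_of_mem_Icc {W : Ω → ℝ} (hW : Measurable W) {a b : ℝ} (h : ∀ ω, W ω ∈ Icc a b) :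
    BddMeas mΩ W :=
  ⟨hW, max |a| |b|, fun ω => abs_le_max_abs_abs (h ω).1 (h ω).2⟩

variable {P : Measure Ω} {U : Ω → ℝ}

theorem IsUnitUniform.bddMeas_quantileExt_sub (hU : IsUnitUniform P U) {Q : Measure ℝ}
    [IsProbabilityMeasure Q] {a b : ℝ} (hQ : ∀ᵐ y ∂Q, y ∈ Icc a b) (c : ℝ) :
    BddMeas mΩ fun ω => quantileExt Q b (U ω) - c :=
  bddMeas_of_mem_Icc (((monotone_quantileExt hQ).measurable.comp hU.measurable).sub_const c)
    fun _ => ⟨sub_le_sub_right (quantileExt_mem_Icc hQ _).1 c,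
      sub_le_sub_right (quantileExt_mem_Icc hQ _).2 c⟩

variable [IsProbabilityMeasure P]

theorem IsUnitUniform.map_quantileExt_sub (hU : IsUnitUniform P U) {Q : Measure ℝ}
    [IsProbabilityMeasure Q] {a b : ℝ} (hQ : ∀ᵐ y ∂Q, y ∈ Icc a b) (c : ℝ) :
    P.map (fun ω => quantileExt Q b (U ω) - c) = Q.map (· - c) := by
  conv_rhs => rw [← map_quantileExt_comp hU hQ]
  have hm : Measurable fun ω => quantileExt Q b (U ω) :=
    (monotone_quantileExt hQ).measurable.comp hU.measurable
  rw [Measure.map_map (measurable_sub_const c) hm]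
  rfl

theorem le_statistic_of_wrd (hatom : AtomlessOn mΩ P) {pref : (Ω → ℝ) → (Ω → ℝ) → Prop}
    {γ : Measure ℝ → ℝ} (hγ : IsStatistic γ)
    (hrep : ∀ X Y : Ω → ℝ, BddMeas mΩ X → BddMeas mΩ Y →
      (pref X Y ↔ γ (P.map Y) ≤ γ (P.map X)))
    (hwrd : WeakRiskDiversification mΩ pref) {Q P' R : Measure ℝ} (hQ : IsDistribution Q)
    (hP' : IsDistribution P') (hR : IsDistribution R) {l : ℝ} (hl0 : 0 ≤ l) (hl1 : l ≤ 1)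
    (hq : ∀ β : ℝ, 0 < β → β < 1 →
      distQuantile R β = l * distQuantile Q β + (1 - l) * distQuantile P' β)
    (hle : γ P' ≤ γ Q) : γ P' ≤ γ R := by
  obtain ⟨c, hc0, hγc⟩ := hγ.exists_map_sub_const_eq hQ hP' hle
  obtain ⟨U, hU⟩ := hatom.exists_isUnitUniform
  obtain ⟨_, aQ, bQ, habQ⟩ := hQ
  obtain ⟨_, aP, bP, habP⟩ := hP'
  obtain ⟨_, aR, bR, habR⟩ := hR
  have hQ := ae_mem_Icc_of_measure_eq_one habQ
  have hP' := ae_mem_Icc_of_measure_eq_one habP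
  have hR := ae_mem_Icc_of_measure_eq_one habR
  set X := fun ω => quantileExt Q bQ (U ω) - c
  set Y := fun ω => quantileExt P' bP (U ω)
  have hX := hU.bddMeas_quantileExt_sub hQ c
  have hY : BddMeas mΩ Y := by simpa using hU.bddMeas_quantileExt_sub hP' 0
  have hXY : γ (P.map X) = γ (P.map Y) := by
    rw [hU.map_quantileExt_sub hQ, map_quantileExt_comp hU hP', hγc]
  have hcom : Comonotonic X Y :=
    Monotone.comonotonic_comp (fun _ _ h => sub_le_sub_right (monotone_quantileExt hQ h) c)
      (monotone_quantileExt hP') U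
  have hZX := (hrep _ X (hX.convexComb hY l) hX).1 <|
    hwrd X Y hX hY hcom ((hrep X Y hX hY).2 hXY.ge) ((hrep Y X hY hX).2 hXY.le) l hl0 hl1
  have hZ : (fun ω => l * X ω + (1 - l) * Y ω) =ᵐ[P]
      fun ω => quantileExt R bR (U ω) - l * c := by
    filter_upwards [hU.ae_mem_Ioo] with ω hω
    simp only [X, Y, quantileExt_of_mem_Ioo hω, hq _ hω.1 hω.2]
    ring
  calc γ P' = γ (P.map X) := by rw [hU.map_quantileExt_sub hQ, hγc]
    _ ≤ γ (R.map (· - l * c)) := by rwa [Measure.map_congr hZ, hU.map_quantileExt_sub hR] at hZX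
    _ ≤ γ R := hγ.1 R _ ⟨‹_›, aR, bR, habR⟩ (IsDistribution.map_sub_const ⟨‹_›, aR, bR, habR⟩ _)
      (fsdLe_map_sub_const (mul_nonneg hl0 hc0))

theorem comonotonicQuasiconcave_of_wrd (hatom : AtomlessOn mΩ P)
    {pref : (Ω → ℝ) → (Ω → ℝ) → Prop} {γ : Measure ℝ → ℝ} (hγ : IsStatistic γ)
    (hrep : ∀ X Y : Ω → ℝ, BddMeas mΩ X → BddMeas mΩ Y →
      (pref X Y ↔ γ (P.map Y) ≤ γ (P.map X)))
    (hwrd : WeakRiskDiversification mΩ pref) : ComonotonicQuasiconcave γ := by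
  intro Q P' R hQ hP' hR l hl0 hl1 hq
  rcases le_total (γ P') (γ Q) with h | h
  · rw [min_eq_right h]
    exact le_statistic_of_wrd hatom hγ hrep hwrd hQ hP' hR hl0 hl1 hq h
  · rw [min_eq_left h]
    exact le_statistic_of_wrd hatom hγ hrep hwrd hP' hQ hR (sub_nonneg.2 hl1)
      (sub_le_self 1 hl0) (fun β hβ0 hβ1 => by rw [hq β hβ0 hβ1]; ring) h

end Forward

theorem stmt10_general {Ω : Type*} (G : MeasurableSpace Ω)
    (P : @Measure Ω G) (hP : @IsProbabilityMeasure Ω G P) (hatom : AtomlessOn G P)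
    (pref : (Ω → ℝ) → (Ω → ℝ) → Prop)
    (γ : Measure ℝ → ℝ) (hγ : IsCEStatistic γ)
    (hrep : ∀ X Y : Ω → ℝ, BddMeas G X → BddMeas G Y →
      (pref X Y ↔ γ (@Measure.map Ω ℝ G _ Y P) ≤ γ (@Measure.map Ω ℝ G _ X P))) :
    (∀ X Y : Ω → ℝ, BddMeas G X → BddMeas G Y → Comonotonic X Y → pref X Y → pref Y X →
      ∀ l : ℝ, 0 ≤ l → l ≤ 1 → pref (fun ω => l * X ω + (1 - l) * Y ω) X) ↔
    ComonotonicQuasiconcave γ :=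
  ⟨comonotonicQuasiconcave_of_wrd hatom hγ.1 hrep, wrd_of_comonotonicQuasiconcave P hrep⟩

/-- weak risk diversification is characterized by comonotonic
quasiconcavity of the certainty-equivalent statistic (Proposition `prop:coDi`). -/
theorem stmt10 {Ω : Type*} [F : MeasurableSpace Ω] (G : MeasurableSpace Ω) (hG : G ≤ F)
    (P : @Measure Ω G) (hP : @IsProbabilityMeasure Ω G P) (hatom : AtomlessOn G P)
    (pref : (Ω → ℝ) → (Ω → ℝ) → Prop) (hpref : TotalPreorderOn F pref)
    (hM : AxiomM F pref) (hRC : AxiomRC G P pref) (hSRM : AxiomSRM G P pref)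
    (hC : AxiomC F pref)
    (γ : Measure ℝ → ℝ) (hγ : IsCEStatistic γ)
    (hrep : ∀ X Y : Ω → ℝ, BddMeas G X → BddMeas G Y →
      (pref X Y ↔ γ (@Measure.map Ω ℝ G _ Y P) ≤ γ (@Measure.map Ω ℝ G _ X P))) :
    (∀ X Y : Ω → ℝ, BddMeas G X → BddMeas G Y → Comonotonic X Y → pref X Y → pref Y X →
      ∀ l : ℝ, 0 ≤ l → l ≤ 1 → pref (fun ω => l * X ω + (1 - l) * Y ω) X) ↔
    ComonotonicQuasiconcave γ :=
  stmt10_general G P hP hatom pref γ hγ hrep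

end
end

section
/- Let ν be a continuous capacity on a measurable space (Ω, F), and let γ be a biseparable statistic: γ(Q) = γ̃(u_#Q) for all distributions Q, where u : ℝ → ℝ is strictly increasing and continuous and γ̃ is a statistic that is constant additive (γ̃((x ↦ x + b)_#Q) = γ̃(Q) + b for all b ∈ ℝ) and positively homogeneous (γ̃((x ↦ a·x)_#Q) = a·γ̃(Q) for all a ≥ 0). Define X ≿ Y ⇔ γ(𝔇_ν(X)) ≥ γ(𝔇_ν(Y)) for bounded measurable X, Y : Ω → ℝ. Then there exists a function I from the bounded measurable functions Ω → ℝ to ℝ such that: I(X) ≥ I(Y) whenever X ≥ Y pointwise; I(aX + b) = a·I(X) + b for every bounded measurable X, every a ≥ 0 and every b ∈ ℝ; and X ≿ Y ⇔ I(u ∘ X) ≥ I(u ∘ Y) for all bounded measurable X, Y. -/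
open MeasureTheory Filter Topology

noncomputable section

lemma probExt (μ ρ : Measure ℝ) [IsProbabilityMeasure μ] [IsProbabilityMeasure ρ]
    (h : ∀ x, μ (Set.Ioi x) = ρ (Set.Ioi x)) : μ = ρ := by
  refine Measure.ext_of_Iic μ ρ fun a => ?_
  rw [← Set.compl_Ioi, prob_compl_eq_one_sub measurableSet_Ioi,
    prob_compl_eq_one_sub measurableSet_Ioi, h a]

lemma preimL (f : ℝ → ℝ) (hf : Monotone f) (hfc : Continuous f) (x : ℝ) :
    f ⁻¹' Set.Ioi x = ∅ ∨ f ⁻¹' Set.Ioi x = Set.univ ∨ ∃ c, f ⁻¹' Set.Ioi x = Set.Ioi c := by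
  set S := f ⁻¹' Set.Ioi x with hS
  by_cases h0 : S = ∅
  · exact Or.inl h0
  by_cases h1 : S = Set.univ
  · exact Or.inr (Or.inl h1)
  refine Or.inr (Or.inr ?_)
  have hne : S.Nonempty := Set.nonempty_iff_ne_empty.2 h0
  obtain ⟨z, hz⟩ : Sᶜ.Nonempty := by
    rw [Set.nonempty_compl]; exact h1
  have hzS : f z ≤ x := not_lt.mp hz
  have hbb : BddBelow S := ⟨z, fun y hy => by
    by_contra hc
    exact absurd (hf (le_of_not_ge hc)) (not_le.mpr (lt_of_le_of_lt hzS hy))⟩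
  have hopen : IsOpen S := isOpen_Ioi.preimage hfc
  refine ⟨sInf S, Set.ext fun y => ?_⟩
  constructor
  · intro hy
    obtain ⟨ε, hε, hball⟩ := Metric.isOpen_iff.mp hopen y hy
    have h2 : y - ε/2 ∈ S := hball (by
      simp only [Metric.mem_ball, Real.dist_eq]
      rw [show y - ε/2 - y = -(ε/2) by ring, abs_neg, abs_of_pos (by linarith)]; linarith)
    have := csInf_le hbb h2
    simp only [Set.mem_Ioi]; linarith
  · intro hy
    obtain ⟨s, hs, hsy⟩ := exists_lt_of_csInf_lt hne hy
    exact lt_of_lt_of_le hs (hf hsy.le)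

lemma bddComp {Ω : Type*} {m : MeasurableSpace Ω} {X : Ω → ℝ} (hX : BddMeas m X)
    (f : ℝ → ℝ) (hf : Monotone f) (hfc : Continuous f) :
    BddMeas m (fun ω => f (X ω)) := by
  obtain ⟨hXm, M, hM⟩ := hX
  refine ⟨hfc.measurable.comp hXm, max |f (-M)| |f M|, fun ω => ?_⟩
  have h := abs_le.mp (hM ω)
  exact abs_le_max_abs_abs (hf h.1) (hf h.2)

lemma distMap {Q : Measure ℝ} (hQ : IsDistribution Q) (f : ℝ → ℝ) (hf : Monotone f)
    (hfc : Continuous f) : IsDistribution (Measure.map f Q) := by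
  obtain ⟨hP, a, b, hab⟩ := hQ
  haveI := hP
  refine ⟨Measure.isProbabilityMeasure_map hfc.measurable.aemeasurable, f a, f b, ?_⟩
  rw [Measure.map_apply hfc.measurable measurableSet_Icc]
  refine le_antisymm prob_le_one ?_
  calc (1:ENNReal) = Q (Set.Icc a b) := hab.symm
    _ ≤ _ := measure_mono fun y hy =>
        show f y ∈ Set.Icc (f a) (f b) from ⟨hf hy.1, hf hy.2⟩

lemma mapEqD {Ω : Type*} {m : MeasurableSpace Ω} {ν : Set Ω → ℝ}
    (hν : IsContinuousCapacity m ν) {D : (Ω → ℝ) → Measure ℝ} (hD : IsChoquetATD m ν D)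
    {X : Ω → ℝ} (hX : BddMeas m X) (f : ℝ → ℝ) (hf : Monotone f) (hfc : Continuous f) :
    Measure.map f (D X) = D (fun ω => f (X ω)) := by
  obtain ⟨hDX, hDXv⟩ := hD X hX
  have hfX : BddMeas m (fun ω => f (X ω)) := bddComp hX f hf hfc
  obtain ⟨hDfX, hDfXv⟩ := hD _ hfX
  haveI := hDX.1
  haveI := hDfX.1
  haveI : IsProbabilityMeasure (Measure.map f (D X)) :=
    Measure.isProbabilityMeasure_map hfc.measurable.aemeasurable
  refine probExt _ _ fun x => ?_
  rw [Measure.map_apply hfc.measurable measurableSet_Ioi]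
  refine (ENNReal.toReal_eq_toReal_iff' (measure_ne_top _ _) (measure_ne_top _ _)).mp ?_
  rw [hDfXv x]
  have hset : {ω | x < f (X ω)} = X ⁻¹' (f ⁻¹' Set.Ioi x) := rfl
  rcases preimL f hf hfc x with h | h | ⟨c, h⟩
  · rw [h, hset, h]
    simp [hν.1.1]
  · rw [h, hset, h]
    simp [hν.1.2.1, measure_univ]
  · rw [h, hset, h, hDXv c]
    rfl

/-- a Choquet ATE preference relation with a biseparable
certainty-equivalent statistic is biseparable
(Proposition `prop:riskEx` (iii)). -/
theorem stmt13 {Ω : Type*} [F : MeasurableSpace Ω] (ν : Set Ω → ℝ)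
    (hν : IsContinuousCapacity F ν)
    (γ γt : Measure ℝ → ℝ) (u : ℝ → ℝ) (hu : StrictMono u) (huc : Continuous u)
    (hγ : IsStatistic γ) (hγt : IsStatistic γt)
    (hCA : ∀ (b : ℝ) (Q : Measure ℝ), IsDistribution Q →
      γt (Measure.map (fun x => x + b) Q) = γt Q + b)
    (hPH : ∀ a : ℝ, 0 ≤ a → ∀ Q : Measure ℝ, IsDistribution Q →
      γt (Measure.map (fun x => a * x) Q) = a * γt Q)
    (hbis : ∀ Q : Measure ℝ, IsDistribution Q → γ Q = γt (Measure.map u Q))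
    (D : (Ω → ℝ) → Measure ℝ) (hD : IsChoquetATD F ν D) :
    ∃ I : (Ω → ℝ) → ℝ,
      (∀ X Y : Ω → ℝ, BddMeas F X → BddMeas F Y → (∀ ω, Y ω ≤ X ω) → I Y ≤ I X) ∧
      (∀ X : Ω → ℝ, BddMeas F X → ∀ a : ℝ, 0 ≤ a → ∀ b : ℝ,
        I (fun ω => a * X ω + b) = a * I X + b) ∧
      (∀ X Y : Ω → ℝ, BddMeas F X → BddMeas F Y →
        (γ (D Y) ≤ γ (D X) ↔ I (fun ω => u (Y ω)) ≤ I (fun ω => u (X ω)))) := by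
  have hν' := hν
  obtain ⟨⟨hν0, hν1, hνmono⟩, -, -⟩ := hν
  refine ⟨fun Z => γt (D Z), ?_, ?_, ?_⟩
  · -- monotonicity
    intro X Y hX hY hle
    obtain ⟨hDX, hDXv⟩ := hD X hX
    obtain ⟨hDY, hDYv⟩ := hD Y hY
    haveI := hDX.1
    haveI := hDY.1
    refine hγt.1 (D X) (D Y) hDX hDY fun x => ?_
    refine (ENNReal.toReal_le_toReal (measure_ne_top _ _) (measure_ne_top _ _)).mp ?_
    rw [hDXv x, hDYv x]
    exact hνmono _ _ (hY.1 measurableSet_Ioi) (hX.1 measurableSet_Ioi)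
      (fun ω hω => lt_of_lt_of_le hω (hle ω))
  · -- affine
    intro X hX a ha b
    show γt (D fun ω => a * X ω + b) = a * γt (D X) + b
    have hmul : Monotone fun y : ℝ => a * y := fun y z h => mul_le_mul_of_nonneg_left h ha
    have haff : Monotone fun y : ℝ => a * y + b := fun y z h => by
      simpa using add_le_add_right (mul_le_mul_of_nonneg_left h ha) b
    have h1 : D (fun ω => a * X ω + b) = Measure.map (fun y => a * y + b) (D X) :=
      (mapEqD hν' hD hX _ haff (by continuity)).symm
    have h2 : Measure.map (fun y => a * y + b) (D X)
        = Measure.map (fun y => y + b) (Measure.map (fun y => a * y) (D X)) := by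
      rw [Measure.map_map (by fun_prop) (by fun_prop)]
      rfl
    have hDX : IsDistribution (D X) := (hD X hX).1
    have hQ' : IsDistribution (Measure.map (fun y => a * y) (D X)) :=
      distMap hDX _ hmul (by continuity)
    rw [h1, h2, hCA b _ hQ', hPH a ha _ hDX]
  · -- representation
    intro X Y hX hY
    show γ (D Y) ≤ γ (D X) ↔ γt (D fun ω => u (Y ω)) ≤ γt (D fun ω => u (X ω))
    have key : ∀ Z : Ω → ℝ, BddMeas F Z → γ (D Z) = γt (D (fun ω => u (Z ω))) := by
      intro Z hZ
      rw [hbis (D Z) (hD Z hZ).1, mapEqD hν' hD hZ u hu.monotone huc]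
    rw [key X hX, key Y hY]


end
end

section
/- Let ν be a continuous capacity on a measurable space (Ω, F). Then ν is exact if and only if the following holds: for every n ≥ 1, all bounded measurable X₁, …, Xₙ : Ω → ℝ, all λ₁, …, λₙ ∈ [0,1] with λ₁ + ⋯ + λₙ = 1 such that ∑ₖ λₖXₖ = x·1_A + y·1_{Aᶜ} for some measurable A and some x, y ∈ ℝ, and every α ∈ (0,1]: ∫₀^α q_ν(∑ₖ λₖXₖ, β) dβ ≥ ∑ₖ λₖ ∫₀^α q_ν(Xₖ, β) dβ. (This integrated-quantile inequality is, for compactly supported distributions, the paper's second-order stochastic dominance condition 𝔇_ν(∑ₖ λₖXₖ) ≥_ssd ⨁ₖ λₖ ⊗ 𝔇_ν(Xₖ), and exactness of ν is equivalent to 𝔇_ν = 𝔇_{𝔈(ν)}.) -/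
open MeasureTheory Filter Topology

noncomputable section

/-!
(⇒) Let `μ` be a core element with `μ A = ν A`. Since `ν ≤ μ` on upper level sets, `q_ν ≤ q_μ`,
and the expected shortfall `∫₀^α q_μ(X, β) dβ` is at most `∫ X g dμ` for every `0 ≤ g ≤ 1` with
`∫ g dμ = α` (a layer-cake comparison). For the binary act `Z = x 1_A + y 1_Aᶜ` with `y ≤ x`, a
weight `g` that is constant on `A` and on `Aᶜ` turns this into an equality, and `X ↦ ∫ X g dμ` is
linear.

(⇐) At `α = 1` the integrated quantile is the Choquet integral. Mixing the slack
`c + m 1_A - ∑ λₖ 1_Bₖ ≥ 0` with the indicators `1_Bₖ` turns the hypothesis into a balancedness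
condition: `∑ λₖ 1_Bₖ ≤ c + m 1_A` implies `∑ λₖ ν(Bₖ) ≤ c + m ν(A)`. It makes the infimum of
`c + m ν(A) - ∑ λₖ ν(Bₖ)` over all `X + ∑ λₖ 1_Bₖ ≤ c + m 1_A` a real sublinear functional on
bounded functions. A linear minorant (Hahn–Banach), evaluated on indicators, is an additive set
function `κ ≥ ν` with `κ(A) = ν(A)`; since `κ(s) = 1 - κ(sᶜ) ≤ 1 - ν(sᶜ)`, continuity of `ν` from
below makes `κ` σ-additive.
-/

section

open Set
open scoped Classical

variable {Ω : Type*}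

lemma setIntegral_Ioo_ite_lt {c x y α : ℝ} (hc : 0 ≤ c) (hα : 0 ≤ α) :
    ∫ β in Ioo 0 α, (if β < c then y else x) = y * min α c + x * (α - min α c) := by
  have hsplit : (fun β : ℝ => if β < c then y else x) =
      fun β => x + (y - x) * (Iio c).indicator (fun _ => 1) β := by
    ext β; by_cases h : β < c <;> simp [h]
  have : IsFiniteMeasure (volume.restrict (Ioo (0 : ℝ) α)) :=
    isFiniteMeasure_restrict.2 measure_Ioo_lt_top.ne
  rw [hsplit, integral_add (integrable_const x)
    (((integrable_const 1).indicator measurableSet_Iio).const_mul _), integral_const_mul,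
    integral_indicator_const (1 : ℝ) measurableSet_Iio,
    measureReal_restrict_apply measurableSet_Iio, Iio_inter_Ioo]
  simp [hα, min_comm c α, le_min hα hc]
  ring

lemma integral_le_integral_of_measure_lt_le {α β : Type*} [MeasurableSpace α]
    [MeasurableSpace β] {μ : Measure α} {ρ : Measure β} {f : α → ℝ} {g : β → ℝ}
    (hf0 : 0 ≤ᵐ[μ] f) (hf : AEMeasurable f μ) (hg0 : 0 ≤ᵐ[ρ] g) (hg : Integrable g ρ)
    (h : ∀ t > 0, μ {a | t < f a} ≤ ρ {b | t < g b}) :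
    ∫ a, f a ∂μ ≤ ∫ b, g b ∂ρ := by
  rw [integral_eq_lintegral_of_nonneg_ae hf0 hf.aestronglyMeasurable,
    integral_eq_lintegral_of_nonneg_ae hg0 hg.aestronglyMeasurable]
  refine ENNReal.toReal_mono hg.lintegral_lt_top.ne ?_
  rw [lintegral_eq_lintegral_meas_lt μ hf0 hf, lintegral_eq_lintegral_meas_lt ρ hg0 hg.aemeasurable]
  exact setLIntegral_mono' measurableSet_Ioi h

lemma exists_mem_Icc_mul_eq_min {p α : ℝ} (hp0 : 0 ≤ p) (hp1 : p ≤ 1) (hα0 : 0 ≤ α) (hα1 : α ≤ 1) :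
    ∃ a ∈ Icc (0 : ℝ) 1, ∃ b ∈ Icc (0 : ℝ) 1,
      a * p = α - min α (1 - p) ∧ b * (1 - p) = min α (1 - p) := by
  refine ⟨(α - min α (1 - p)) / p, ⟨?_, ?_⟩, min α (1 - p) / (1 - p), ⟨?_, ?_⟩,
    div_mul_cancel_of_imp fun h => ?_, div_mul_cancel_of_imp fun h => ?_⟩
  · exact div_nonneg (by linarith [min_le_left α (1 - p)]) hp0
  · refine div_le_one_of_le₀ ?_ hp0
    rcases min_cases α (1 - p) with ⟨h, _⟩ | ⟨h, _⟩ <;> rw [h] <;> linarith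
  · exact div_nonneg (le_min hα0 (by linarith)) (by linarith)
  · exact div_le_one_of_le₀ (min_le_right _ _) (by linarith)
  · rw [h, sub_zero, min_eq_left hα1, sub_self]
  · rw [h, min_eq_right hα0]

lemma ind_apply (A : Set Ω) (ω : Ω) : ind A ω = if ω ∈ A then 1 else 0 :=
  Set.indicator_apply A _ ω

lemma mul_ind_add_mul_ind_compl (A : Set Ω) (x y : ℝ) (ω : Ω) :
    x * ind A ω + y * ind Aᶜ ω = if ω ∈ A then x else y := by
  by_cases h : ω ∈ A <;> simp [ind_apply, h]

lemma ind_nonneg (A : Set Ω) (ω : Ω) : 0 ≤ ind A ω := by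
  rw [ind_apply]; split_ifs <;> norm_num

lemma ind_le_one (A : Set Ω) (ω : Ω) : ind A ω ≤ 1 := by
  rw [ind_apply]; split_ifs <;> norm_num

lemma IsCapacity.nonneg {mΩ : MeasurableSpace Ω} {ν : Set Ω → ℝ} (hν : IsCapacity mΩ ν)
    {A : Set Ω} (hA : MeasurableSet A) : 0 ≤ ν A :=
  hν.1 ▸ hν.2.2 ∅ A MeasurableSet.empty hA (empty_subset A)

lemma IsCapacity.le_one {mΩ : MeasurableSpace Ω} {ν : Set Ω → ℝ} (hν : IsCapacity mΩ ν)
    {A : Set Ω} (hA : MeasurableSet A) : ν A ≤ 1 :=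
  hν.2.1 ▸ hν.2.2 A univ hA MeasurableSet.univ (subset_univ A)

def capQuantileSet (ν : Set Ω → ℝ) (X : Ω → ℝ) (β : ℝ) : Set ℝ :=
  {t | ν {ω | t < X ω} < 1 - β}

section Quantile

variable {ν : Set Ω → ℝ} {X : Ω → ℝ} {d M β : ℝ}

lemma le_of_mem_capQuantileSet (h1 : ν univ = 1) (hX : ∀ ω, d ≤ X ω) (hβ : 0 ≤ β) {t : ℝ}
    (ht : t ∈ capQuantileSet ν X β) : d ≤ t := by
  by_contra! h
  have : {ω | t < X ω} = univ := eq_univ_of_forall fun ω => h.trans_le (hX ω)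
  rw [capQuantileSet, mem_ofPred_eq, this, h1] at ht
  linarith

lemma bddBelow_capQuantileSet (h1 : ν univ = 1) (hM : ∀ ω, |X ω| ≤ M) (hβ : 0 ≤ β) :
    BddBelow (capQuantileSet ν X β) :=
  ⟨-M, fun _ ht => le_of_mem_capQuantileSet h1 (fun ω => neg_le_of_abs_le (hM ω)) hβ ht⟩

lemma mem_capQuantileSet (h0 : ν ∅ = 0) (hM : ∀ ω, |X ω| ≤ M) (hβ : β < 1) :
    M ∈ capQuantileSet ν X β := by
  have : {ω | M < X ω} = ∅ :=
    eq_empty_of_forall_notMem fun ω hω => (le_of_abs_le (hM ω)).not_gt hω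
  rw [capQuantileSet, mem_ofPred_eq, this, h0]
  linarith

variable (h0 : ν ∅ = 0) (h1 : ν univ = 1) (hM : ∀ ω, |X ω| ≤ M)
include h0 h1 hM

lemma capQuantile_le (hβ0 : 0 ≤ β) (hβ1 : β < 1) : capQuantile ν X β ≤ M :=
  csInf_le (bddBelow_capQuantileSet h1 hM hβ0) (mem_capQuantileSet h0 hM hβ1)

lemma neg_le_capQuantile (hβ0 : 0 ≤ β) (hβ1 : β < 1) : -M ≤ capQuantile ν X β :=
  le_csInf ⟨M, mem_capQuantileSet h0 hM hβ1⟩ fun _ ht =>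
    le_of_mem_capQuantileSet h1 (fun ω => neg_le_of_abs_le (hM ω)) hβ0 ht

lemma capQuantile_mono {β₁ β₂ : ℝ} (hβ₁ : 0 ≤ β₁) (hβ₂ : β₂ < 1) (h : β₁ ≤ β₂) :
    capQuantile ν X β₁ ≤ capQuantile ν X β₂ :=
  csInf_le_csInf (bddBelow_capQuantileSet h1 hM hβ₁) ⟨M, mem_capQuantileSet h0 hM hβ₂⟩
    fun _ ht => by simp only [mem_ofPred_eq] at ht ⊢; linarith

lemma integrableOn_capQuantile {α : ℝ} (hα : α ≤ 1) :
    IntegrableOn (capQuantile ν X) (Ioo 0 α) := by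
  have hmono : MonotoneOn (capQuantile ν X) (Ioo 0 α) := fun β₁ h₁ β₂ h₂ h =>
    capQuantile_mono h0 h1 hM h₁.1.le (h₂.2.trans_le hα) h
  have : IsFiniteMeasure (volume.restrict (Ioo (0 : ℝ) α)) :=
    isFiniteMeasure_restrict.2 measure_Ioo_lt_top.ne
  refine Integrable.of_bound
    (aemeasurable_restrict_of_monotoneOn measurableSet_Ioo hmono).aestronglyMeasurable M ?_
  filter_upwards [ae_restrict_mem measurableSet_Ioo] with β hβ
  exact abs_le.2 ⟨neg_le_capQuantile h0 h1 hM hβ.1.le (hβ.2.trans_le hα),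
    capQuantile_le h0 h1 hM hβ.1.le (hβ.2.trans_le hα)⟩

end Quantile

lemma capQuantile_nonneg {ν : Set Ω → ℝ} {X : Ω → ℝ} {β : ℝ} (h1 : ν univ = 1)
    (hX : ∀ ω, 0 ≤ X ω) (hβ : 0 ≤ β) : 0 ≤ capQuantile ν X β :=
  Real.sInf_nonneg fun _ ht => le_of_mem_capQuantileSet h1 hX hβ ht

lemma capQuantile_le_capQuantile {ν ν' : Set Ω → ℝ} {X : Ω → ℝ} {M β : ℝ}
    (h0 : ν' ∅ = 0) (h1 : ν univ = 1) (hM : ∀ ω, |X ω| ≤ M)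
    (hle : ∀ t, ν {ω | t < X ω} ≤ ν' {ω | t < X ω}) (hβ0 : 0 ≤ β) (hβ1 : β < 1) :
    capQuantile ν X β ≤ capQuantile ν' X β :=
  csInf_le_csInf (bddBelow_capQuantileSet h1 hM hβ0) ⟨M, mem_capQuantileSet h0 hM hβ1⟩
    fun t ht => (hle t).trans_lt ht

lemma setOf_lt_ite (A : Set Ω) {x y t : ℝ} (hyx : y ≤ x) :
    {ω | t < if ω ∈ A then x else y} = if t < y then univ else if t < x then A else ∅ := by
  ext ω
  by_cases hω : ω ∈ A <;> split_ifs <;> simp [*]; linarith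

lemma capQuantile_ite {ν : Set Ω → ℝ} {A : Set Ω} {x y β : ℝ} (h0 : ν ∅ = 0) (h1 : ν univ = 1)
    (hyx : y ≤ x) (hβ0 : 0 ≤ β) (hβ1 : β < 1) :
    capQuantile ν (fun ω => if ω ∈ A then x else y) β = if β < 1 - ν A then y else x := by
  have hyZ : ∀ ω, y ≤ if ω ∈ A then x else y := fun ω => by split_ifs <;> linarith
  by_cases h : β < 1 - ν A
  · rw [if_pos h]
    refine IsLeast.csInf_eq ⟨?_, fun t ht => le_of_mem_capQuantileSet h1 hyZ hβ0 ht⟩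
    rw [mem_ofPred_eq, setOf_lt_ite A hyx, if_neg (lt_irrefl y)]
    split_ifs
    · linarith
    · rw [h0]; linarith
  · rw [if_neg h]
    refine IsLeast.csInf_eq ⟨?_, fun t ht => ?_⟩
    · rw [mem_ofPred_eq, setOf_lt_ite A hyx, if_neg hyx.not_gt, if_neg (lt_irrefl x), h0]
      linarith
    · by_contra! htx
      rw [mem_ofPred_eq, setOf_lt_ite A hyx, if_pos htx] at ht
      split_ifs at ht
      · rw [h1] at ht; linarith
      · exact h (by linarith)

lemma setIntegral_capQuantile_ite {ν : Set Ω → ℝ} {A : Set Ω} {x y α : ℝ} (h0 : ν ∅ = 0)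
    (h1 : ν univ = 1) (hyx : y ≤ x) (hA : ν A ≤ 1) (hα0 : 0 ≤ α) (hα1 : α ≤ 1) :
    ∫ β in Ioo 0 α, capQuantile ν (fun ω => if ω ∈ A then x else y) β =
      y * min α (1 - ν A) + x * (α - min α (1 - ν A)) := by
  rw [setIntegral_congr_fun measurableSet_Ioo fun β hβ =>
    capQuantile_ite h0 h1 hyx hβ.1.le (hβ.2.trans_le hα1)]
  exact setIntegral_Ioo_ite_lt (by linarith) hα0

lemma intervalIntegral_capQuantile_ite {ν : Set Ω → ℝ} {A : Set Ω} {x y : ℝ} (h0 : ν ∅ = 0)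
    (h1 : ν univ = 1) (hyx : y ≤ x) (hA0 : 0 ≤ ν A) (hA1 : ν A ≤ 1) :
    ∫ β in (0 : ℝ)..1, capQuantile ν (fun ω => if ω ∈ A then x else y) β =
      x * ν A + y * (1 - ν A) := by
  rw [intervalIntegral.integral_of_le zero_le_one, integral_Ioc_eq_integral_Ioo,
    setIntegral_capQuantile_ite h0 h1 hyx hA1 zero_le_one le_rfl, min_eq_right (by linarith)]
  ring

lemma intervalIntegral_capQuantile_ind [mΩ : MeasurableSpace Ω] {ν : Set Ω → ℝ}
    (hν : IsCapacity mΩ ν) {B : Set Ω} (hB : MeasurableSet B) :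
    ∫ β in (0 : ℝ)..1, capQuantile ν (ind B) β = ν B := by
  rw [show ind B = fun ω => if ω ∈ B then 1 else 0 from funext (ind_apply B),
    intervalIntegral_capQuantile_ite hν.1 hν.2.1 zero_le_one (hν.nonneg hB) (hν.le_one hB)]
  ring

section ExpectedShortfall

variable [MeasurableSpace Ω] {μ : Measure Ω} [IsProbabilityMeasure μ] {X : Ω → ℝ} {M : ℝ}

lemma exists_lt_measureReal_lt (hX : Measurable X) {t δ : ℝ}
    (h : μ.real {ω | t ≤ X ω} < δ) : ∃ u < t, μ.real {ω | u < X ω} < δ := by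
  have hlim : Tendsto (fun r => μ {ω | t - r < X ω}) (𝓝[>] 0) (𝓝 (μ {ω | t ≤ X ω})) := by
    have hinter : (⋂ r > (0 : ℝ), {ω | t - r < X ω}) = {ω | t ≤ X ω} := by
      ext ω
      simp only [mem_iInter, mem_ofPred_eq]
      refine ⟨fun hω => le_of_forall_pos_lt_add fun r hr => ?_, fun hω r hr => by linarith⟩
      linarith [hω r hr]
    rw [← hinter]
    exact tendsto_measure_biInter_gt (fun r _ => (hX measurableSet_Ioi).nullMeasurableSet)
      (fun i j _ hij ω hω => by simp only [mem_ofPred_eq] at hω ⊢; linarith)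
      ⟨1, one_pos, measure_ne_top μ _⟩
  have hev := ((ENNReal.tendsto_toReal (measure_ne_top μ _)).comp hlim).eventually_lt_const h
  obtain ⟨r, hr, hr0⟩ := (hev.and self_mem_nhdsWithin).exists
  exact ⟨t - r, by linarith, hr⟩

lemma capQuantile_lt_of_lt_measureReal (hX : Measurable X) (hM : ∀ ω, |X ω| ≤ M)
    {β t : ℝ} (hβ : 0 ≤ β) (h : β < μ.real {ω | X ω < t}) : capQuantile μ.real X β < t := by
  have hge : μ.real {ω | t ≤ X ω} < 1 - β := by
    have : {ω | t ≤ X ω} = {ω | X ω < t}ᶜ := by ext ω; simp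
    rw [this, probReal_compl_eq_one_sub (measurableSet_lt hX measurable_const)]
    linarith
  obtain ⟨u, hut, hu⟩ := exists_lt_measureReal_lt hX hge
  exact (csInf_le (bddBelow_capQuantileSet probReal_univ hM hβ) hu).trans_lt hut

lemma integrable_of_abs_le {f : Ω → ℝ} (hf : Measurable f) {C : ℝ} (hC : ∀ ω, |f ω| ≤ C) :
    Integrable f μ :=
  Integrable.of_bound hf.aestronglyMeasurable C (ae_of_all _ hC)

lemma integral_max_sub_le_setIntegral_sub_capQuantile {c α : ℝ} (hX : Measurable X)
    (hM : ∀ ω, |X ω| ≤ M) (hα : α ≤ 1) (hqc : ∀ β ∈ Ioo 0 α, capQuantile μ.real X β ≤ c)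
    (hc : μ.real {ω | X ω < c} ≤ α) :
    ∫ ω, max (c - X ω) 0 ∂μ ≤ ∫ β in Ioo 0 α, (c - capQuantile μ.real X β) := by
  refine integral_le_integral_of_measure_lt_le (ae_of_all _ fun ω => le_max_right _ _)
    ((measurable_const.sub hX).max measurable_const).aemeasurable ?_
    ((integrableOn_const measure_Ioo_lt_top.ne).sub
      (integrableOn_capQuantile measureReal_empty probReal_univ hM hα)) fun s hs => ?_
  · filter_upwards [ae_restrict_mem measurableSet_Ioo] with β hβ
    exact sub_nonneg.2 (hqc β hβ)
  have hset : {ω | s < max (c - X ω) 0} = {ω | X ω < c - s} := by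
    ext ω
    simp only [mem_ofPred_eq, lt_max_iff]
    constructor
    · rintro (h | h) <;> linarith
    · exact fun h => Or.inl (by linarith)
  have hr : μ.real {ω | X ω < c - s} ≤ α :=
    (measureReal_mono fun ω (hω : X ω < c - s) => (by linarith : X ω < c)).trans hc
  -- levels `β < μ {X < c - s}` have quantile below `c - s`
  rw [hset, Measure.restrict_apply' measurableSet_Ioo, ← ofReal_measureReal,
    ← sub_zero (μ.real _), ← Real.volume_Ioo]
  refine measure_mono fun β hβ => ⟨?_, hβ.1, hβ.2.trans_le hr⟩
  have := capQuantile_lt_of_lt_measureReal hX hM hβ.1.le hβ.2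
  simp only [mem_ofPred_eq]
  linarith

lemma setIntegral_capQuantile_le_integral_mul_of_le {c α : ℝ} (hX : Measurable X)
    (hM : ∀ ω, |X ω| ≤ M) (hα : α ≤ 1) (hqc : ∀ β ∈ Ioo 0 α, capQuantile μ.real X β ≤ c)
    (hc : μ.real {ω | X ω < c} ≤ α) {g : Ω → ℝ} (hg : Measurable g)
    (hg0 : ∀ ω, 0 ≤ g ω) (hg1 : ∀ ω, g ω ≤ 1) (hgα : ∫ ω, g ω ∂μ = α) :
    ∫ β in Ioo 0 α, capQuantile μ.real X β ≤ ∫ ω, X ω * g ω ∂μ := by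
  have hshortfall := integral_max_sub_le_setIntegral_sub_capQuantile hX hM hα hqc hc
  have hα0 : 0 ≤ α := hgα ▸ integral_nonneg hg0
  have hc_int : IntegrableOn (fun _ => c) (Ioo (0 : ℝ) α) :=
    integrableOn_const measure_Ioo_lt_top.ne
  rw [integral_sub hc_int (integrableOn_capQuantile measureReal_empty probReal_univ hM hα),
    setIntegral_const, Real.volume_real_Ioo_of_le hα0, sub_zero, smul_eq_mul] at hshortfall
  have hg_abs : ∀ ω, |g ω| ≤ 1 := fun ω => abs_le.2 ⟨by linarith [hg0 ω], hg1 ω⟩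
  have hg_int : Integrable g μ := integrable_of_abs_le hg hg_abs
  have hφ_int : Integrable (fun ω => max (c - X ω) 0) μ := by
    refine integrable_of_abs_le ((measurable_const.sub hX).max measurable_const)
      (C := |c| + M) fun ω => ?_
    rw [abs_of_nonneg (le_max_right _ _)]
    exact max_le (by linarith [le_abs_self c, neg_le_of_abs_le (hM ω)])
      (by linarith [abs_nonneg c, (abs_nonneg _).trans (hM ω)])
  have hpt : ∫ ω, (c * g ω - max (c - X ω) 0) ∂μ ≤ ∫ ω, X ω * g ω ∂μ := by
    refine integral_mono ((hg_int.const_mul c).sub hφ_int) ((integrable_of_abs_le hX hM).mul_bdd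
      hg.aestronglyMeasurable (ae_of_all _ hg_abs)) fun ω => ?_
    rcases le_total c (X ω) with h | h
    · rw [max_eq_right (by linarith)]
      nlinarith [hg0 ω]
    · rw [max_eq_left (by linarith)]
      nlinarith [hg1 ω]
  rw [integral_sub (hg_int.const_mul c) hφ_int, integral_const_mul, hgα] at hpt
  linarith

lemma exists_capQuantile_le_and_measureReal_lt_le (hX : Measurable X) (hM : ∀ ω, |X ω| ≤ M)
    {α : ℝ} (hα0 : 0 ≤ α) (hα1 : α ≤ 1) :
    ∃ c, (∀ β ∈ Ioo 0 α, capQuantile μ.real X β ≤ c) ∧ μ.real {ω | X ω < c} ≤ α := by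
  -- `capQuantile _ _ 1 = sInf ∅ = 0` is a junk value, so the level `α = 1` uses the bound `M`
  rcases hα1.eq_or_lt with rfl | hα1
  · exact ⟨M, fun β hβ => capQuantile_le measureReal_empty probReal_univ hM hβ.1.le hβ.2,
      measureReal_le_one⟩
  refine ⟨capQuantile μ.real X α, fun β hβ => capQuantile_mono measureReal_empty probReal_univ
    hM hβ.1.le hα1 hβ.2.le, le_of_not_gt fun h => ?_⟩
  exact (capQuantile_lt_of_lt_measureReal hX hM hα0 h).false

lemma setIntegral_capQuantile_le_integral_mul {α : ℝ} (hX : Measurable X)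
    (hM : ∀ ω, |X ω| ≤ M) (hα : α ≤ 1) {g : Ω → ℝ} (hg : Measurable g)
    (hg0 : ∀ ω, 0 ≤ g ω) (hg1 : ∀ ω, g ω ≤ 1) (hgα : ∫ ω, g ω ∂μ = α) :
    ∫ β in Ioo 0 α, capQuantile μ.real X β ≤ ∫ ω, X ω * g ω ∂μ := by
  obtain ⟨c, hqc, hc⟩ :=
    exists_capQuantile_le_and_measureReal_lt_le (μ := μ) hX hM (hgα ▸ integral_nonneg hg0) hα
  exact setIntegral_capQuantile_le_integral_mul_of_le hX hM hα hqc hc hg hg0 hg1 hgα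

lemma integral_ite_mem {A : Set Ω} (hA : MeasurableSet A) (u v : ℝ) :
    ∫ ω, (if ω ∈ A then u else v) ∂μ = u * μ.real A + v * (1 - μ.real A) := by
  rw [← probReal_compl_eq_one_sub hA]
  exact (integral_piecewise hA (integrableOn_const (measure_ne_top μ _))
    (integrableOn_const (measure_ne_top μ _))).trans (by simp [mul_comm])

end ExpectedShortfall

lemma exists_probabilityMeasure_of_additive [MeasurableSpace Ω] {ν κ : Set Ω → ℝ}
    (hν1 : ν univ = 1)
    (hν : ∀ s : ℕ → Set Ω, (∀ n, MeasurableSet (s n)) → Monotone s →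
      Tendsto (fun n => ν (s n)) atTop (𝓝 (ν (⋃ n, s n))))
    (hκ0 : ∀ s, MeasurableSet s → 0 ≤ κ s) (hνκ : ∀ s, MeasurableSet s → ν s ≤ κ s)
    (hκ1 : κ univ = 1)
    (hκ : ∀ s t, MeasurableSet s → MeasurableSet t → Disjoint s t → κ (s ∪ t) = κ s + κ t) :
    ∃ μ : Measure Ω, IsProbabilityMeasure μ ∧ ∀ s, MeasurableSet s → μ.real s = κ s := by
  have hC : IsSetRing {s : Set Ω | MeasurableSet s} :=
    ⟨.empty, fun _ _ => .union, fun _ _ => .diff⟩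
  have hκ_empty : κ ∅ = 0 := by
    have := hκ ∅ ∅ .empty .empty (disjoint_empty _)
    rw [empty_union] at this
    linarith
  have hκ_compl : ∀ s, MeasurableSet s → κ s = 1 - κ sᶜ := fun s hs => by
    have := hκ s sᶜ hs hs.compl disjoint_compl_right
    rw [union_compl_self, hκ1] at this
    linarith
  let m : AddContent ENNReal {s : Set Ω | MeasurableSet s} :=
    hC.addContent_of_union (fun s => ENNReal.ofReal (κ s)) (by simp [hκ_empty])
      fun hs ht hst => by rw [hκ _ _ hs ht hst, ENNReal.ofReal_add (hκ0 _ hs) (hκ0 _ ht)]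
  have hm : ∀ s, m s = ENNReal.ofReal (κ s) := fun _ => rfl
  have hm_tendsto : ∀ ⦃s : ℕ → Set Ω⦄, (∀ n, MeasurableSet (s n)) → Antitone s →
      ⋂ n, s n = ∅ → Tendsto (fun n => m (s n)) atTop (𝓝 0) := by
    intro s hs hanti hempty
    have hup := hν (fun n => (s n)ᶜ) (fun n => (hs n).compl)
      fun i j h => compl_subset_compl.2 (hanti h)
    rw [← compl_iInter, hempty, compl_empty, hν1] at hup
    have hκs : Tendsto (fun n => κ (s n)) atTop (𝓝 0) := by
      refine tendsto_of_tendsto_of_tendsto_of_le_of_le tendsto_const_nhds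
        (by simpa using (tendsto_const_nhds (x := (1 : ℝ))).sub hup) (fun n => hκ0 _ (hs n))
        fun n => ?_
      rw [hκ_compl _ (hs n)]
      linarith [hνκ _ (hs n).compl]
    simpa [hm] using ENNReal.tendsto_ofReal hκs
  refine ⟨Measure.ofMeasurable (fun s _ => m s) (addContent_empty) fun f hf hd =>
    addContent_iUnion_eq_sum_of_tendsto_zero hC m (fun s _ => (hm s).symm ▸ ENNReal.ofReal_ne_top)
      hm_tendsto hf (MeasurableSet.iUnion hf) hd, ⟨?_⟩, fun s hs => ?_⟩
  · rw [Measure.ofMeasurable_apply _ .univ, hm, hκ1, ENNReal.ofReal_one]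
  · rw [measureReal_def, Measure.ofMeasurable_apply _ hs, hm, ENNReal.toReal_ofReal (hκ0 s hs)]

def boundedFunctions (Ω : Type*) : Submodule ℝ (Ω → ℝ) where
  carrier := {X | ∃ M, ∀ ω, |X ω| ≤ M}
  add_mem' := fun ⟨M, hM⟩ ⟨N, hN⟩ =>
    ⟨M + N, fun ω => (abs_add_le _ _).trans (add_le_add (hM ω) (hN ω))⟩
  zero_mem' := ⟨0, fun _ => by simp⟩
  smul_mem' := fun r _ ⟨M, hM⟩ =>
    ⟨|r| * M, fun ω => by
      rw [Pi.smul_apply, smul_eq_mul, abs_mul]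
      exact mul_le_mul_of_nonneg_left (hM ω) (abs_nonneg r)⟩

lemma ind_mem_boundedFunctions (A : Set Ω) : ind A ∈ boundedFunctions Ω :=
  ⟨1, fun ω => by rw [abs_of_nonneg (ind_nonneg A ω)]; exact ind_le_one A ω⟩

def weightedSum (L : List (ℝ × Set Ω)) (f : Set Ω → ℝ) : ℝ :=
  (L.map fun p => p.1 * f p.2).sum

lemma weightedSum_append (L L' : List (ℝ × Set Ω)) (f : Set Ω → ℝ) :
    weightedSum (L ++ L') f = weightedSum L f + weightedSum L' f := by
  simp [weightedSum]

lemma weightedSum_scale (r : ℝ) (L : List (ℝ × Set Ω)) (f : Set Ω → ℝ) :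
    weightedSum (L.map fun p => (r * p.1, p.2)) f = r * weightedSum L f := by
  simp [weightedSum, Function.comp_def, mul_assoc, List.sum_map_mul_left]

lemma weightedSum_nonneg {L : List (ℝ × Set Ω)} {f : Set Ω → ℝ} (hL : ∀ p ∈ L, 0 ≤ p.1)
    (hf : ∀ B, 0 ≤ f B) : 0 ≤ weightedSum L f :=
  List.sum_nonneg fun _ h => by
    obtain ⟨p, hp, rfl⟩ := List.mem_map.1 h
    exact mul_nonneg (hL p hp) (hf p.2)

lemma sum_getElem_eq_weightedSum (L : List (ℝ × Set Ω)) (f : Set Ω → ℝ) :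
    ∑ i : Fin L.length, L[i].1 * f L[i].2 = weightedSum L f :=
  Fin.sum_univ_fun_getElem L fun p => p.1 * f p.2

section Capacity

variable [mΩ : MeasurableSpace Ω] {ν : Set Ω → ℝ}

lemma sum_setIntegral_capQuantile_le_of_core (hν : IsCapacity mΩ ν) {μ : Measure Ω}
    [IsProbabilityMeasure μ] (hcore : ∀ B, MeasurableSet B → ν B ≤ μ.real B) {A : Set Ω}
    (hA : MeasurableSet A) (hμA : μ.real A = ν A) {ι : Type*} [Fintype ι] {X : ι → Ω → ℝ}
    {l : ι → ℝ} (hX : ∀ k, BddMeas mΩ (X k)) (hl : ∀ k, 0 ≤ l k) {x y α : ℝ} (hyx : y ≤ x)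
    (hZ : ∀ ω, ∑ k, l k * X k ω = if ω ∈ A then x else y) (hα0 : 0 ≤ α) (hα1 : α ≤ 1) :
    ∑ k, l k * ∫ β in Ioo 0 α, capQuantile ν (X k) β ≤
      ∫ β in Ioo 0 α, capQuantile ν (fun ω => ∑ k, l k * X k ω) β := by
  obtain ⟨a, ⟨ha0, ha1⟩, b, ⟨hb0, hb1⟩, hap, hbp⟩ :=
    exists_mem_Icc_mul_eq_min (hν.nonneg hA) (hν.le_one hA) hα0 hα1
  set g : Ω → ℝ := fun ω => if ω ∈ A then a else b with hg_def
  have hg : Measurable g := measurable_const.piecewise hA measurable_const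
  have hg0 : ∀ ω, 0 ≤ g ω := fun ω => by dsimp [g]; split_ifs <;> assumption
  have hg1 : ∀ ω, g ω ≤ 1 := fun ω => by dsimp [g]; split_ifs <;> assumption
  have hgα : ∫ ω, g ω ∂μ = α := by rw [integral_ite_mem hA, hμA]; linarith
  have hk : ∀ k, ∫ β in Ioo 0 α, capQuantile ν (X k) β ≤ ∫ ω, X k ω * g ω ∂μ := fun k => by
    obtain ⟨hXm, M, hM⟩ := hX k
    refine (setIntegral_mono_on (integrableOn_capQuantile hν.1 hν.2.1 hM hα1)
      (integrableOn_capQuantile measureReal_empty probReal_univ hM hα1) measurableSet_Ioo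
      fun β hβ => ?_).trans (setIntegral_capQuantile_le_integral_mul hXm hM hα1 hg hg0 hg1 hgα)
    exact capQuantile_le_capQuantile measureReal_empty hν.2.1 hM
      (fun t => hcore _ (hXm measurableSet_Ioi)) hβ.1.le (hβ.2.trans_le hα1)
  have hXg : ∀ k, Integrable (fun ω => l k * (X k ω * g ω)) μ := fun k => by
    obtain ⟨hXm, M, hM⟩ := hX k
    exact ((integrable_of_abs_le hXm hM).mul_bdd hg.aestronglyMeasurable
      (ae_of_all _ fun ω => abs_le.2 ⟨by linarith [hg0 ω], hg1 ω⟩)).const_mul _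
  calc ∑ k, l k * ∫ β in Ioo 0 α, capQuantile ν (X k) β
      ≤ ∑ k, l k * ∫ ω, X k ω * g ω ∂μ :=
        Finset.sum_le_sum fun k _ => mul_le_mul_of_nonneg_left (hk k) (hl k)
    _ = ∫ ω, (if ω ∈ A then x * a else y * b) ∂μ := by
        simp_rw [← integral_const_mul]
        rw [← integral_finsetSum _ fun k _ => hXg k]
        congr 1 with ω
        simp_rw [← mul_assoc, ← Finset.sum_mul, hZ ω, hg_def]
        split_ifs <;> rfl
    _ = ∫ β in Ioo 0 α, capQuantile ν (fun ω => ∑ k, l k * X k ω) β := by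
        rw [integral_ite_mem hA, funext hZ, setIntegral_capQuantile_ite hν.1 hν.2.1 hyx
          (hν.le_one hA) hα0 hα1, hμA]
        linear_combination x * hap + y * hbp

lemma sum_setIntegral_capQuantile_le_of_exact (hν : IsCapacity mΩ ν)
    (hex : ExactCapacity mΩ ν) {A : Set Ω} (hA : MeasurableSet A) {ι : Type*} [Fintype ι]
    {X : ι → Ω → ℝ} {l : ι → ℝ} (hX : ∀ k, BddMeas mΩ (X k)) (hl : ∀ k, 0 ≤ l k) {x y α : ℝ}
    (hZ : ∀ ω, ∑ k, l k * X k ω = if ω ∈ A then x else y) (hα0 : 0 ≤ α) (hα1 : α ≤ 1) :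
    ∑ k, l k * ∫ β in Ioo 0 α, capQuantile ν (X k) β ≤
      ∫ β in Ioo 0 α, capQuantile ν (fun ω => ∑ k, l k * X k ω) β := by
  rcases le_total y x with hyx | hxy
  · obtain ⟨μ, hμ, hcore, hμA⟩ := hex A hA
    exact sum_setIntegral_capQuantile_le_of_core hν hcore hA hμA hX hl hyx hZ hα0 hα1
  · obtain ⟨μ, hμ, hcore, hμA⟩ := hex Aᶜ hA.compl
    refine sum_setIntegral_capQuantile_le_of_core hν hcore hA.compl hμA hX hl hxy
      (fun ω => ?_) hα0 hα1
    by_cases h : ω ∈ A <;> simp [hZ, h]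

variable {A : Set Ω}

structure Majorant (A : Set Ω) (X : Ω → ℝ) where
  terms : List (ℝ × Set Ω)
  c : ℝ
  m : ℝ
  nonneg : ∀ p ∈ terms, 0 ≤ p.1
  measurableSet : ∀ p ∈ terms, MeasurableSet p.2
  m_nonneg : 0 ≤ m
  le : ∀ ω, X ω + weightedSum terms (ind · ω) ≤ c + m * ind A ω

namespace Majorant

variable {X Y : Ω → ℝ}

def value (P : Majorant A X) (ν : Set Ω → ℝ) : ℝ :=
  P.c + P.m * ν A - weightedSum P.terms ν

def add (P : Majorant A X) (Q : Majorant A Y) : Majorant A (X + Y) where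
  terms := P.terms ++ Q.terms
  c := P.c + Q.c
  m := P.m + Q.m
  nonneg p hp := (List.mem_append.1 hp).elim (P.nonneg p) (Q.nonneg p)
  measurableSet p hp := (List.mem_append.1 hp).elim (P.measurableSet p) (Q.measurableSet p)
  m_nonneg := add_nonneg P.m_nonneg Q.m_nonneg
  le ω := by
    rw [Pi.add_apply, weightedSum_append]
    linarith [P.le ω, Q.le ω]

lemma value_add (P : Majorant A X) (Q : Majorant A Y) (ν : Set Ω → ℝ) :
    (P.add Q).value ν = P.value ν + Q.value ν := by
  simp only [value, add, weightedSum_append]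
  ring

def smul {r : ℝ} (hr : 0 ≤ r) (P : Majorant A X) : Majorant A (r • X) where
  terms := P.terms.map fun p => (r * p.1, p.2)
  c := r * P.c
  m := r * P.m
  nonneg p hp := by
    obtain ⟨q, hq, rfl⟩ := List.mem_map.1 hp
    exact mul_nonneg hr (P.nonneg q hq)
  measurableSet p hp := by
    obtain ⟨q, hq, rfl⟩ := List.mem_map.1 hp
    exact P.measurableSet q hq
  m_nonneg := mul_nonneg hr P.m_nonneg
  le ω := by
    rw [Pi.smul_apply, smul_eq_mul, weightedSum_scale]
    nlinarith [P.le ω]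

lemma value_smul {r : ℝ} (hr : 0 ≤ r) (P : Majorant A X) (ν : Set Ω → ℝ) :
    (P.smul hr).value ν = r * P.value ν := by
  simp only [value, smul, weightedSum_scale]
  ring

def ofLe {c m : ℝ} (hm : 0 ≤ m) (h : ∀ ω, X ω ≤ c + m * ind A ω) : Majorant A X where
  terms := []
  c := c
  m := m
  nonneg _ := by simp
  measurableSet _ := by simp
  m_nonneg := hm
  le ω := by simpa [weightedSum] using h ω

lemma value_ofLe {c m : ℝ} (hm : 0 ≤ m) (h : ∀ ω, X ω ≤ c + m * ind A ω) (ν : Set Ω → ℝ) :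
    (ofLe hm h).value ν = c + m * ν A := by
  simp [value, ofLe, weightedSum]

def negInd {B : Set Ω} (hB : MeasurableSet B) : Majorant A (-ind B) where
  terms := [(1, B)]
  c := 0
  m := 0
  nonneg _ hp := by simp_all
  measurableSet _ hp := by simp_all
  m_nonneg := le_rfl
  le ω := by simp [weightedSum]

lemma value_negInd {B : Set Ω} (hB : MeasurableSet B) (ν : Set Ω → ℝ) :
    (negInd (A := A) hB).value ν = -ν B := by
  simp [value, negInd, weightedSum]

def slack (P : Majorant A 0) (ω : Ω) : ℝ :=
  P.c + P.m * ind A ω - weightedSum P.terms (ind · ω)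

lemma slack_nonneg (P : Majorant A 0) (ω : Ω) : 0 ≤ P.slack ω := by
  rw [slack]
  linarith [P.le ω, show (0 : Ω → ℝ) ω = 0 from rfl]

lemma bddMeas_slack (P : Majorant A 0) (hA : MeasurableSet A) : BddMeas mΩ P.slack := by
  refine ⟨?_, P.c + P.m, fun ω => ?_⟩
  · change Measurable fun ω => P.c + P.m * ind A ω - weightedSum P.terms (ind · ω)
    simp_rw [← sum_getElem_eq_weightedSum]
    exact (measurable_const.add (measurable_const.mul (measurable_const.indicator hA))).sub
      (Finset.measurable_sum _ fun i _ => measurable_const.mul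
        (measurable_const.indicator (P.measurableSet _ (List.getElem_mem _))))
  · rw [abs_of_nonneg (P.slack_nonneg ω), slack]
    nlinarith [ind_le_one A ω, P.m_nonneg, weightedSum_nonneg P.nonneg (ind_nonneg · ω)]

end Majorant

def BalancedAt (ν : Set Ω → ℝ) (A : Set Ω) : Prop :=
  ∀ P : Majorant A 0, 0 ≤ P.value ν

def majorantInf (ν : Set Ω → ℝ) (A : Set Ω) (X : Ω → ℝ) : ℝ :=
  ⨅ P : Majorant A X, P.value ν

variable {X Y : Ω → ℝ}

lemma BalancedAt.le_value (hν : BalancedAt ν A) {d : ℝ} (hd : ∀ ω, d ≤ X ω)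
    (P : Majorant A X) : d ≤ P.value ν := by
  have := hν { P with
    c := P.c - d
    le := fun ω => by linarith [P.le ω, hd ω, show (0 : Ω → ℝ) ω = 0 from rfl] }
  simp only [Majorant.value] at this ⊢
  linarith

lemma BalancedAt.majorantInf_le (hν : BalancedAt ν A) {d : ℝ} (hd : ∀ ω, d ≤ X ω)
    (P : Majorant A X) : majorantInf ν A X ≤ P.value ν :=
  ciInf_le ⟨d, forall_mem_range.2 (hν.le_value hd)⟩ P

lemma BalancedAt.le_majorantInf (hν : BalancedAt ν A) {d c : ℝ} (hd : ∀ ω, d ≤ X ω)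
    (hc : ∀ ω, X ω ≤ c) : d ≤ majorantInf ν A X :=
  have : Nonempty (Majorant A X) := ⟨.ofLe le_rfl fun ω => by simpa using hc ω⟩
  le_ciInf (hν.le_value hd)

lemma BalancedAt.majorantInf_add_le (hν : BalancedAt ν A) (hX : X ∈ boundedFunctions Ω)
    (hY : Y ∈ boundedFunctions Ω) :
    majorantInf ν A (X + Y) ≤ majorantInf ν A X + majorantInf ν A Y := by
  obtain ⟨MX, hMX⟩ := hX
  obtain ⟨MY, hMY⟩ := hY
  have : Nonempty (Majorant A X) := ⟨.ofLe le_rfl fun ω => by simpa using le_of_abs_le (hMX ω)⟩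
  have : Nonempty (Majorant A Y) := ⟨.ofLe le_rfl fun ω => by simpa using le_of_abs_le (hMY ω)⟩
  have hsum : ∀ (P : Majorant A X) (Q : Majorant A Y),
      majorantInf ν A (X + Y) ≤ P.value ν + Q.value ν := fun P Q =>
    Majorant.value_add P Q ν ▸ hν.majorantInf_le (d := -MX + -MY)
      (fun ω => add_le_add (neg_le_of_abs_le (hMX ω)) (neg_le_of_abs_le (hMY ω))) (P.add Q)
  have hY' : ∀ P : Majorant A X, majorantInf ν A (X + Y) - P.value ν ≤ majorantInf ν A Y :=
    fun P => le_ciInf fun Q => by linarith [hsum P Q]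
  have hX' : majorantInf ν A (X + Y) - majorantInf ν A Y ≤ majorantInf ν A X :=
    le_ciInf fun P => by linarith [hY' P]
  linarith

lemma BalancedAt.majorantInf_smul_le (hν : BalancedAt ν A) (hX : X ∈ boundedFunctions Ω)
    {r : ℝ} (hr : 0 < r) : majorantInf ν A (r • X) ≤ r * majorantInf ν A X := by
  obtain ⟨M, hM⟩ := hX
  have : Nonempty (Majorant A X) := ⟨.ofLe le_rfl fun ω => by simpa using le_of_abs_le (hM ω)⟩
  rw [← div_le_iff₀' hr]
  refine le_ciInf fun P => (div_le_iff₀' hr).2 ?_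
  rw [← Majorant.value_smul hr.le]
  exact hν.majorantInf_le (d := r * -M)
    (fun ω => mul_le_mul_of_nonneg_left (neg_le_of_abs_le (hM ω)) hr.le) _

lemma BalancedAt.majorantInf_smul (hν : BalancedAt ν A) (hX : X ∈ boundedFunctions Ω)
    {r : ℝ} (hr : 0 < r) : majorantInf ν A (r • X) = r * majorantInf ν A X := by
  refine le_antisymm (hν.majorantInf_smul_le hX hr) ?_
  have := hν.majorantInf_smul_le ((boundedFunctions Ω).smul_mem r hX) (inv_pos.2 hr)
  rw [inv_smul_smul₀ hr.ne'] at this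
  rwa [← le_inv_mul_iff₀ hr]

lemma BalancedAt.exists_linearMap_le (hν : BalancedAt ν A) :
    ∃ g : boundedFunctions Ω →ₗ[ℝ] ℝ, ∀ X, g X ≤ majorantInf ν A X := by
  obtain ⟨g, -, hg⟩ := exists_extension_of_le_sublinear ⟨⊥, 0⟩
    (fun X : boundedFunctions Ω => majorantInf ν A X)
    (fun r hr X => by simpa using hν.majorantInf_smul X.2 hr)
    (fun X Y => by simpa using hν.majorantInf_add_le X.2 Y.2)
    fun X => by
      rw [(Submodule.mem_bot ℝ).1 X.2]
      simpa using hν.le_majorantInf (X := 0) (d := 0) (c := 0) (fun _ => le_rfl) fun _ => le_rfl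
  exact ⟨g, hg⟩

lemma BalancedAt.exists_measure (hcap : IsCapacity mΩ ν)
    (hup : ∀ s : ℕ → Set Ω, (∀ n, MeasurableSet (s n)) → Monotone s →
      Tendsto (fun n => ν (s n)) atTop (𝓝 (ν (⋃ n, s n))))
    (hA : MeasurableSet A) (hν : BalancedAt ν A) :
    ∃ μ : Measure Ω, IsProbabilityMeasure μ ∧ (∀ B, MeasurableSet B → ν B ≤ μ.real B) ∧
      μ.real A = ν A := by
  obtain ⟨g, hg⟩ := hν.exists_linearMap_le
  set κ : Set Ω → ℝ := fun B => g ⟨ind B, ind_mem_boundedFunctions B⟩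
  have hνκ : ∀ B, MeasurableSet B → ν B ≤ κ B := fun B hB => by
    have h := hg (-⟨ind B, ind_mem_boundedFunctions B⟩)
    rw [map_neg, Submodule.coe_neg] at h
    have := h.trans (hν.majorantInf_le (d := -1) (fun ω => neg_le_neg (ind_le_one B ω))
      (Majorant.negInd hB))
    rw [Majorant.value_negInd] at this
    linarith
  have hκA : κ A ≤ ν A := by
    refine (hg _).trans ((hν.majorantInf_le (ind_nonneg A)
      (Majorant.ofLe (c := 0) zero_le_one fun ω => by simp)).trans_eq ?_)
    rw [Majorant.value_ofLe]
    ring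
  have hκ1 : κ univ ≤ 1 := by
    refine (hg _).trans ((hν.majorantInf_le (ind_nonneg univ)
      (Majorant.ofLe (c := 1) (m := 0) le_rfl fun ω => by simpa using ind_le_one univ ω)).trans_eq
      ?_)
    rw [Majorant.value_ofLe]
    ring
  have hκ : ∀ s t, MeasurableSet s → MeasurableSet t → Disjoint s t → κ (s ∪ t) = κ s + κ t :=
    fun s t _ _ hst => by
      rw [← map_add]
      exact congrArg g (Subtype.ext (indicator_union_of_disjoint hst _))
  obtain ⟨μ, hμ, hμκ⟩ := exists_probabilityMeasure_of_additive hcap.2.1 hup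
    (fun s hs => (hcap.nonneg hs).trans (hνκ s hs)) hνκ
    (le_antisymm hκ1 (hcap.2.1 ▸ hνκ _ .univ)) hκ
  exact ⟨μ, hμ, fun B hB => (hμκ B hB).symm ▸ hνκ B hB,
    (hμκ A hA).trans (le_antisymm hκA (hνκ A hA))⟩

lemma bddMeas_ind {B : Set Ω} (hB : MeasurableSet B) : BddMeas mΩ (ind B) :=
  ⟨measurable_const.indicator hB, ind_mem_boundedFunctions B⟩

namespace Majorant

variable (P : Majorant A 0)

def weights : Fin (P.terms.length + 1) → ℝ :=
  Fin.cons 1 fun i => P.terms[i].1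

def parts : Fin (P.terms.length + 1) → Ω → ℝ :=
  Fin.cons P.slack fun i => ind P.terms[i].2

lemma weights_nonneg (k : Fin (P.terms.length + 1)) : 0 ≤ P.weights k :=
  Fin.cases zero_le_one (fun _ => P.nonneg _ (List.getElem_mem _)) k

lemma bddMeas_parts (hA : MeasurableSet A) (k : Fin (P.terms.length + 1)) :
    BddMeas mΩ (P.parts k) :=
  Fin.cases (P.bddMeas_slack hA)
    (fun _ => bddMeas_ind (P.measurableSet _ (List.getElem_mem _))) k

lemma sum_weights_mul_parts (ω : Ω) : ∑ k, P.weights k * P.parts k ω = P.c + P.m * ind A ω := by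
  simp only [Fin.sum_univ_succ, weights, parts, Fin.cons_zero, Fin.cons_succ, slack,
    sum_getElem_eq_weightedSum P.terms (ind · ω)]
  ring

lemma sum_weights_mul_integral_capQuantile (hν : IsCapacity mΩ ν) :
    ∑ k, P.weights k * ∫ β in (0 : ℝ)..1, capQuantile ν (P.parts k) β =
      (∫ β in (0 : ℝ)..1, capQuantile ν P.slack β) + weightedSum P.terms ν := by
  have hB : ∀ i : Fin P.terms.length, MeasurableSet P.terms[i].2 := fun i =>
    P.measurableSet _ (List.getElem_mem _)
  simp only [Fin.sum_univ_succ, weights, parts, Fin.cons_zero, Fin.cons_succ, one_mul,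
    intervalIntegral_capQuantile_ind hν (hB _), sum_getElem_eq_weightedSum P.terms ν]

end Majorant

lemma balancedAt_of_sum_le (hν : IsCapacity mΩ ν) (hA : MeasurableSet A)
    (hmix : ∀ n : ℕ, 1 ≤ n → ∀ (X : Fin n → Ω → ℝ) (l : Fin n → ℝ),
      (∀ k, BddMeas mΩ (X k)) → (∀ k, 0 ≤ l k ∧ l k ≤ 1) → ∑ k, l k = 1 → ∀ x y : ℝ,
      (∀ ω, ∑ k, l k * X k ω = x * ind A ω + y * ind Aᶜ ω) →
      ∑ k, l k * ∫ β in (0 : ℝ)..1, capQuantile ν (X k) β ≤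
        ∫ β in (0 : ℝ)..1, capQuantile ν (fun ω => ∑ k, l k * X k ω) β) :
    BalancedAt ν A := by
  intro P
  set S := ∑ k, P.weights k
  have hw_le : ∀ k, P.weights k ≤ S := fun k =>
    Finset.single_le_sum (fun k _ => P.weights_nonneg k) (Finset.mem_univ k)
  have hS : 0 < S := zero_lt_one.trans_le (hw_le 0)
  have hZ : ∀ ω, ∑ k, P.weights k / S * P.parts k ω =
      (P.c + P.m) / S * ind A ω + P.c / S * ind Aᶜ ω := fun ω => by
    rw [mul_ind_add_mul_ind_compl]
    simp_rw [div_mul_eq_mul_div]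
    rw [← Finset.sum_div, P.sum_weights_mul_parts ω, ind_apply]
    split_ifs <;> ring
  have key := hmix _ (Nat.le_add_left 1 _) P.parts (fun k => P.weights k / S) (P.bddMeas_parts hA)
    (fun k => ⟨div_nonneg (P.weights_nonneg k) hS.le, div_le_one_of_le₀ (hw_le k) hS.le⟩)
    (by rw [← Finset.sum_div, div_self hS.ne']) _ _ hZ
  rw [funext fun ω => (hZ ω).trans (mul_ind_add_mul_ind_compl _ _ _ _),
    intervalIntegral_capQuantile_ite hν.1 hν.2.1
      (div_le_div_of_nonneg_right (by linarith [P.m_nonneg]) hS.le) (hν.nonneg hA)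
      (hν.le_one hA)] at key
  simp_rw [div_mul_eq_mul_div] at key
  rw [← Finset.sum_div, P.sum_weights_mul_integral_capQuantile hν,
    show (P.c + P.m) * ν A / S + P.c * (1 - ν A) / S = (P.c + P.m * ν A) / S by ring,
    div_le_div_iff_of_pos_right hS] at key
  have hslack : 0 ≤ ∫ β in (0 : ℝ)..1, capQuantile ν P.slack β :=
    intervalIntegral.integral_nonneg zero_le_one fun β hβ =>
      capQuantile_nonneg hν.2.1 P.slack_nonneg hβ.1
  rw [Majorant.value]
  linarith

end Capacity

end

/-- a continuous capacity is exact iff the Choquet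
act-to-distribution mapping satisfies the integrated-quantile (second-order
stochastic dominance) inequality for all mixtures that equal a binary act
(Proposition `prop:weakerDiv`). -/
theorem stmt15 {Ω : Type*} [F : MeasurableSpace Ω] (ν : Set Ω → ℝ)
    (hν : IsContinuousCapacity F ν) :
    ExactCapacity F ν ↔
    (∀ n : ℕ, 1 ≤ n → ∀ (X : Fin n → Ω → ℝ) (l : Fin n → ℝ),
      (∀ k, BddMeas F (X k)) → (∀ k, 0 ≤ l k ∧ l k ≤ 1) → (∑ k, l k) = 1 →
      ∀ (A : Set Ω) (x y : ℝ), MeasurableSet A →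
        (∀ ω, (∑ k, l k * X k ω) = x * ind A ω + y * ind Aᶜ ω) →
        ∀ α : ℝ, 0 < α → α ≤ 1 →
          (∑ k, l k * ∫ β in (0:ℝ)..α, capQuantile ν (X k) β) ≤
          ∫ β in (0:ℝ)..α, capQuantile ν (fun ω => ∑ k, l k * X k ω) β) := by
  obtain ⟨hcap, hup, -⟩ := hν
  refine ⟨fun hex n _ X l hX hl _ A x y hA hZ α hα0 hα1 => ?_, fun hmix A hA => ?_⟩
  · simp only [intervalIntegral.integral_of_le hα0.le, integral_Ioc_eq_integral_Ioo]
    exact sum_setIntegral_capQuantile_le_of_exact hcap hex hA hX (fun k => (hl k).1)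
      (fun ω => (hZ ω).trans (mul_ind_add_mul_ind_compl A x y ω)) hα0.le hα1
  · exact (balancedAt_of_sum_le hcap hA fun n hn X l hX hl hl1 x y hZ =>
      hmix n hn X l hX hl hl1 A x y hA hZ 1 one_pos le_rfl).exists_measure hcap hup hA

end
end

section
/- Let ν be a continuous capacity on a measurable space (Ω, F), let (Zₙ) be a uniformly bounded sequence of bounded measurable functions Ω → ℝ converging pointwise to a bounded measurable Z : Ω → ℝ. Then for every x ∈ ℝ at which the function t ↦ ν({Z > t}) is continuous, ν({Zₙ > x}) → ν({Z > x}) as n → ∞. (Equivalently, the distributions 𝔇_ν(Zₙ) converge weakly to 𝔇_ν(Z).) -/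
open MeasureTheory Filter Topology

noncomputable section

/-!
Pointwise convergence gives `{Z > x} ⊆ liminf {Zₙ > x} ⊆ limsup {Zₙ > x} ⊆ {Z ≥ x}`, and at a
continuity point `x` of `t ↦ ν {Z > t}` the two outer sets have the same capacity (approach `x`
from the left). Continuity of `ν` along the increasing sets `⋂ n ≥ N, {Zₙ > x}` and the decreasing
sets `⋃ n ≥ N, {Zₙ > x}` then squeezes `ν {Zₙ > x}` to `ν {Z > x}`.
-/

namespace IsCapacity

variable {Ω : Type*} {m : MeasurableSpace Ω} {ν : Set Ω → ℝ}

theorem mono (hν : IsCapacity m ν) {A B : Set Ω} (hA : MeasurableSet[m] A)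
    (hB : MeasurableSet[m] B) (hAB : A ⊆ B) : ν A ≤ ν B :=
  hν.2.2 A B hA hB hAB

theorem apply_setOf_le_le_of_continuousAt (hν : IsCapacity m ν) {Z : Ω → ℝ}
    (hZ : Measurable[m] Z) {x : ℝ} (hx : ContinuousAt (fun t => ν {ω | t < Z ω}) x) :
    ν {ω | x ≤ Z ω} ≤ ν {ω | x < Z ω} :=
  ge_of_tendsto (hx.tendsto.mono_left (nhdsWithin_le_nhds (s := Set.Iio x))) <|
    eventually_nhdsWithin_of_forall fun _ ht =>
      hν.mono (measurableSet_le measurable_const hZ) (measurableSet_lt measurable_const hZ)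
        fun _ hω => (Set.mem_Iio.1 ht).trans_le hω

end IsCapacity

namespace IsContinuousCapacity

variable {Ω : Type*} {m : MeasurableSpace Ω} {ν : Set Ω → ℝ}

theorem tendsto_iInter_ge_liminf (hν : IsContinuousCapacity m ν) {S : ℕ → Set Ω}
    (hS : ∀ n, MeasurableSet[m] (S n)) :
    Tendsto (fun N => ν (⋂ n ≥ N, S n)) atTop (𝓝 (ν (liminf S atTop))) := by
  rw [liminf_eq_iSup_iInf_of_nat]
  exact hν.2.1 _ (fun N => .iInter fun n => .iInter fun _ => hS n)
    fun _ _ hNM => Set.biInter_mono (fun _ hn => hNM.trans hn) fun _ _ => le_rfl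

theorem tendsto_iUnion_ge_limsup (hν : IsContinuousCapacity m ν) {S : ℕ → Set Ω}
    (hS : ∀ n, MeasurableSet[m] (S n)) :
    Tendsto (fun N => ν (⋃ n ≥ N, S n)) atTop (𝓝 (ν (limsup S atTop))) := by
  rw [limsup_eq_iInf_iSup_of_nat]
  exact hν.2.2 _ (fun N => .iUnion fun n => .iUnion fun _ => hS n)
    fun _ _ hNM => Set.biUnion_mono (fun _ hn => hNM.trans hn) fun _ _ => le_rfl

theorem tendsto_of_subset_liminf_of_limsup_subset (hν : IsContinuousCapacity m ν)
    {S : ℕ → Set Ω} {T U : Set Ω} (hS : ∀ n, MeasurableSet[m] (S n))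
    (hT : MeasurableSet[m] T) (hU : MeasurableSet[m] U) (hTS : T ⊆ liminf S atTop)
    (hSU : limsup S atTop ⊆ U) (hUT : ν U ≤ ν T) :
    Tendsto (fun n => ν (S n)) atTop (𝓝 (ν T)) := by
  have hliminf_meas : MeasurableSet[m] (liminf S atTop) := .measurableSet_liminf hS
  have hlimsup_meas : MeasurableSet[m] (limsup S atTop) := .measurableSet_limsup hS
  have hT_le : ν T ≤ ν (liminf S atTop) := hν.1.mono hT hliminf_meas hTS
  have hliminf_le : ν (liminf S atTop) ≤ ν (limsup S atTop) :=
    hν.1.mono hliminf_meas hlimsup_meas liminf_le_limsup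
  have hlimsup_le : ν (limsup S atTop) ≤ ν U := hν.1.mono hlimsup_meas hU hSU
  have hliminf : ν (liminf S atTop) = ν T := by linarith
  have hlimsup : ν (limsup S atTop) = ν T := by linarith
  refine tendsto_of_tendsto_of_tendsto_of_le_of_le (hliminf ▸ hν.tendsto_iInter_ge_liminf hS)
    (hlimsup ▸ hν.tendsto_iUnion_ge_limsup hS) (fun n => ?_) (fun n => ?_)
  · exact hν.1.mono (.iInter fun i => .iInter fun _ => hS i) (hS n)
      (Set.iInter₂_subset n le_rfl)
  · exact hν.1.mono (hS n) (.iUnion fun i => .iUnion fun _ => hS i)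
      (Set.subset_iUnion₂ (s := fun i (_ : i ≥ n) => S i) n le_rfl)

end IsContinuousCapacity

section PointwiseLimit

variable {ι Ω : Type*} {l : Filter ι} {Zn : ι → Ω → ℝ} {Z : Ω → ℝ}

theorem setOf_lt_subset_liminf (hlim : ∀ ω, Tendsto (fun n => Zn n ω) l (𝓝 (Z ω))) (x : ℝ) :
    {ω | x < Z ω} ⊆ liminf (fun n => {ω | x < Zn n ω}) l := fun ω hω =>
  mem_liminf_iff_eventually_mem.2 <| (hlim ω).eventually (eventually_gt_nhds hω)

theorem limsup_subset_setOf_le (hlim : ∀ ω, Tendsto (fun n => Zn n ω) l (𝓝 (Z ω))) (x : ℝ) :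
    limsup (fun n => {ω | x < Zn n ω}) l ⊆ {ω | x ≤ Z ω} := fun ω hω =>
  ge_of_tendsto_of_frequently (hlim ω) <|
    (mem_limsup_iff_frequently_mem.1 hω).mono fun _ h => le_of_lt h

end PointwiseLimit

theorem stmt16_general {Ω : Type*} [F : MeasurableSpace Ω] (ν : Set Ω → ℝ)
    (hν : IsContinuousCapacity F ν) (Zn : ℕ → Ω → ℝ) (Z : Ω → ℝ)
    (hZn : ∀ n, BddMeas F (Zn n)) (hZ : BddMeas F Z)
    (hlim : ∀ ω, Filter.Tendsto (fun n => Zn n ω) Filter.atTop (nhds (Z ω)))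
    (x : ℝ) (hx : ContinuousAt (fun t => ν {ω | t < Z ω}) x) :
    Filter.Tendsto (fun n => ν {ω | x < Zn n ω}) Filter.atTop (nhds (ν {ω | x < Z ω})) :=
  hν.tendsto_of_subset_liminf_of_limsup_subset
    (fun n => measurableSet_lt measurable_const (hZn n).1)
    (measurableSet_lt measurable_const hZ.1) (measurableSet_le measurable_const hZ.1)
    (setOf_lt_subset_liminf hlim x) (limsup_subset_setOf_le hlim x)
    (hν.1.apply_setOf_le_le_of_continuousAt hZ.1 hx)

/-- continuity of a continuous capacity along uniformly bounded
pointwise convergent sequences, at continuity points of the limit's survival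
function (Lemma `lem:con`). -/
theorem stmt16 {Ω : Type*} [F : MeasurableSpace Ω] (ν : Set Ω → ℝ)
    (hν : IsContinuousCapacity F ν) (Zn : ℕ → Ω → ℝ) (Z : Ω → ℝ)
    (hZn : ∀ n, BddMeas F (Zn n)) (hZ : BddMeas F Z)
    (hub : ∃ M : ℝ, ∀ n ω, |Zn n ω| ≤ M)
    (hlim : ∀ ω, Filter.Tendsto (fun n => Zn n ω) Filter.atTop (nhds (Z ω)))
    (x : ℝ) (hx : ContinuousAt (fun t => ν {ω | t < Z ω}) x) :
    Filter.Tendsto (fun n => ν {ω | x < Zn n ω}) Filter.atTop (nhds (ν {ω | x < Z ω})) :=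
  stmt16_general (F := F) ν hν Zn Z hZn hZ hlim x hx

end
end

section
/- Let ν be a continuous capacity on a measurable space (Ω, F), let X : Ω → ℝ be bounded measurable, and let α ∈ (0,1). Define g_α : [0,1] → [0,1] by g_α(β) = 1 if β ≥ 1 − α and g_α(β) = 0 otherwise. Then the Choquet integral of X with respect to the distorted capacity A ↦ g_α(ν(A)) equals the ν-quantile of X at level α; that is, ∫₀^∞ g_α(ν({X > x})) dx + ∫_{−∞}^0 (g_α(ν({X > x})) − 1) dx = inf { x ∈ ℝ : ν({X > x}) < 1 − α }. -/
/-!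
Since `x ↦ ν {X > x}` is antitone, the distorted survival function `g_α (ν {X > x})` is `1`
below the quantile `q` and `0` above it, so the Choquet integral reduces to that of the constant
`q`: the two half-lines contribute `max q 0` and `-max (-q) 0`. Boundedness of `X` makes the set
defining `q` nonempty and bounded below, so its `sInf` is the genuine infimum.
-/

open MeasureTheory Filter Topology

noncomputable section

open Set

section StepSurvival

variable {g : ℝ → ℝ} {q : ℝ}

lemma ae_eq_indicator_Iio_of_step (h_lt : ∀ x < q, g x = 1) (h_gt : ∀ x, q < x → g x = 0) :
    g =ᵐ[volume] (Iio q).indicator 1 := by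
  filter_upwards [Measure.ae_ne volume q] with x hx
  rcases hx.lt_or_gt with hxq | hxq
  · simp [h_lt x hxq, hxq]
  · simp [h_gt x hxq, hxq.le]

lemma setIntegral_Ioi_zero_of_step (h_lt : ∀ x < q, g x = 1) (h_gt : ∀ x, q < x → g x = 0) :
    ∫ x in Ioi 0, g x = max q 0 := by
  rw [integral_congr_ae (ae_restrict_of_ae (ae_eq_indicator_Iio_of_step h_lt h_gt)),
    integral_indicator_one measurableSet_Iio, measureReal_restrict_apply measurableSet_Iio,
    inter_comm, Ioi_inter_Iio, Real.volume_real_Ioo, sub_zero]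

lemma setIntegral_Iio_zero_sub_one_of_step (h_lt : ∀ x < q, g x = 1)
    (h_gt : ∀ x, q < x → g x = 0) :
    ∫ x in Iio 0, (g x - 1) = -max (-q) 0 := by
  have hg : (fun x => g x - 1) =ᵐ[volume] -(Ici q).indicator 1 := by
    filter_upwards [ae_eq_indicator_Iio_of_step h_lt h_gt] with x hx
    rw [hx, ← compl_Iio, indicator_compl]
    simp
  rw [integral_congr_ae (ae_restrict_of_ae hg), Pi.neg_def, integral_neg,
    integral_indicator_one measurableSet_Ici, measureReal_restrict_apply measurableSet_Ici,
    Ici_inter_Iio, Real.volume_real_Ico, zero_sub]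

lemma setIntegral_Ioi_zero_add_setIntegral_Iio_zero_sub_one_of_step (h_lt : ∀ x < q, g x = 1)
    (h_gt : ∀ x, q < x → g x = 0) :
    (∫ x in Ioi 0, g x) + ∫ x in Iio 0, (g x - 1) = q := by
  rw [setIntegral_Ioi_zero_of_step h_lt h_gt, setIntegral_Iio_zero_sub_one_of_step h_lt h_gt,
    ← sub_eq_add_neg, max_zero_sub_eq_self]

end StepSurvival

section Threshold

variable {f : ℝ → ℝ} {c : ℝ}

lemma le_of_lt_sInf_setOf_lt {x : ℝ} (hbdd : BddBelow {y | f y < c})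
    (hx : x < sInf {y | f y < c}) :
    c ≤ f x :=
  not_lt.1 fun h => notMem_of_lt_csInf hx hbdd h

lemma Antitone.lt_of_sInf_setOf_lt_lt (hf : Antitone f) {x : ℝ} (hne : {y | f y < c}.Nonempty)
    (hx : sInf {y | f y < c} < x) : f x < c := by
  obtain ⟨y, hy, hyx⟩ := exists_lt_of_csInf_lt hne hx
  exact (hf hyx.le).trans_lt hy

lemma Antitone.bddBelow_setOf_lt {a : ℝ} (hf : Antitone f) (ha : c ≤ f a) :
    BddBelow {y | f y < c} :=
  ⟨a, fun _ hy => le_of_not_gt fun hya => not_lt_of_ge (ha.trans (hf hya.le)) hy⟩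

theorem Antitone.setIntegral_ite_le_eq_sInf (hf : Antitone f) {a b : ℝ} (ha : c ≤ f a)
    (hb : f b < c) :
    (∫ x in Ioi 0, if c ≤ f x then (1 : ℝ) else 0) +
      ∫ x in Iio 0, ((if c ≤ f x then (1 : ℝ) else 0) - 1) = sInf {y | f y < c} :=
  setIntegral_Ioi_zero_add_setIntegral_Iio_zero_sub_one_of_step
    (fun _ hx => if_pos (le_of_lt_sInf_setOf_lt (hf.bddBelow_setOf_lt ha) hx))
    (fun _ hx => if_neg (not_le.2 (hf.lt_of_sInf_setOf_lt_lt ⟨b, hb⟩ hx)))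

end Threshold

lemma IsCapacity.antitone_superlevel {Ω : Type*} {m : MeasurableSpace Ω} {ν : Set Ω → ℝ}
    (hν : IsCapacity m ν) {X : Ω → ℝ} (hX : Measurable X) :
    Antitone fun x => ν {ω | x < X ω} := fun _ _ hxy =>
  hν.2.2 _ _ (measurableSet_lt measurable_const hX) (measurableSet_lt measurable_const hX)
    fun _ hω => hxy.trans_lt hω

/-- the Choquet integral with respect to the distorted capacity
`g_α ∘ ν` equals the ν-quantile at level α (Proposition `prop:quant`, first part). -/
theorem stmt17 {Ω : Type*} [F : MeasurableSpace Ω] (ν : Set Ω → ℝ)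
    (hν : IsContinuousCapacity F ν) (X : Ω → ℝ) (hX : BddMeas F X)
    (α : ℝ) (hα0 : 0 < α) (hα1 : α < 1) :
    (∫ x in Set.Ioi (0:ℝ), (if 1 - α ≤ ν {ω | x < X ω} then (1:ℝ) else 0)) +
      (∫ x in Set.Iio (0:ℝ), ((if 1 - α ≤ ν {ω | x < X ω} then (1:ℝ) else 0) - 1)) =
    capQuantile ν X α := by
  obtain ⟨hXm, M, hM⟩ := hX
  have h_empty : {ω | M < X ω} = ∅ :=
    eq_empty_of_forall_notMem fun ω hω => (hω.trans_le ((le_abs_self _).trans (hM ω))).false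
  have h_univ : {ω | -M - 1 < X ω} = univ :=
    eq_univ_of_forall fun ω => show -M - 1 < X ω by linarith [neg_abs_le (X ω), hM ω]
  refine (hν.1.antitone_superlevel hXm).setIntegral_ite_le_eq_sInf (a := -M - 1) (b := M) ?_ ?_
  · rw [h_univ, hν.1.2.1]
    linarith
  · rw [h_empty, hν.1.1]
    linarith

end
end

section
/- Let ν be a continuous capacity on a measurable space (Ω, F), let X : Ω → ℝ be bounded measurable, and let α ∈ (0,1). Define h_α : [0,1] → [0,1] by h_α(β) = max((β − (1 − α))/α, 0). Then the Choquet integral of X with respect to the distorted capacity A ↦ h_α(ν(A)) equals the average of the ν-quantiles of X below level α; that is, ∫₀^∞ h_α(ν({X > x})) dx + ∫_{−∞}^0 (h_α(ν({X > x})) − 1) dx = (1/α) ∫₀^α q_ν(X, β) dβ. -/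
open MeasureTheory Filter Topology

noncomputable section

/-! Write `G x = ν {X > x}` and `|X| ≤ M`: `G` is antitone, `1` left of `-M` and `0` from `M`
on. Since `α * h_α s` is the length of `{β ∈ (0, α] | 1 - β ≤ s}`, the left-hand side is
`1 / α` times the integral of `1{1 - β ≤ G x} - 1{x < 0}` over `[-M, M] × (0, α]`. Integrating
in `x` first, the section `{x | 1 - β ≤ G x}` is a half-line ending at `inf {x | G x < 1 - β}`,
the ν-quantile at level `β`; with `≤` rather than `<` this holds for every `β`, not just
outside a countable set. -/

open Set

theorem volume_real_eq_of_Ioo_subset_of_subset_Icc {s : Set ℝ} {a b : ℝ}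
    (h₁ : Ioo a b ⊆ s) (h₂ : s ⊆ Icc a b) : volume.real s = max (b - a) 0 := by
  have hs : volume s = ENNReal.ofReal (b - a) :=
    le_antisymm (by simpa using measure_mono (μ := volume) h₂)
      (by simpa using measure_mono (μ := volume) h₁)
  rw [measureReal_def, hs, ENNReal.toReal_ofReal']

theorem integral_Ioi_add_integral_Iio_sub_one {f : ℝ → ℝ}
    (hf : Integrable (fun x => f x - (Iio 0).indicator 1 x)) :
    (∫ x in Ioi 0, f x) + ∫ x in Iio 0, (f x - 1) = ∫ x, (f x - (Iio 0).indicator 1 x) := by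
  rw [← intervalIntegral.integral_Iio_add_Ici hf.integrableOn hf.integrableOn,
    ← setIntegral_congr_set Ioi_ae_eq_Ici, add_comm]
  congr 1 <;> refine setIntegral_congr_fun (by measurability) fun x hx => ?_
  · simp [indicator_of_mem hx]
  · rw [indicator_of_notMem (notMem_Iio.2 (le_of_lt hx)), sub_zero]

theorem setIntegral_Icc_indicator_sub_indicator_Iio {L : Set ℝ} (hL : MeasurableSet L)
    {q M : ℝ} (hq : q ∈ Icc (-M) M) (h₁ : Iio q ⊆ L) (h₂ : L ⊆ Iic q) :
    ∫ x in Icc (-M) M, (L.indicator 1 x - (Iio 0).indicator 1 x) = q := by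
  have hM : 0 ≤ M := by linarith [hq.1, hq.2]
  have hL' : volume.real (L ∩ Icc (-M) M) = max (q - -M) 0 :=
    volume_real_eq_of_Ioo_subset_of_subset_Icc
      (fun x hx => ⟨h₁ hx.2, hx.1.le, hx.2.le.trans hq.2⟩)
      (fun x hx => ⟨hx.2.1, h₂ hx.1⟩)
  have hneg : volume.real (Iio 0 ∩ Icc (-M) M) = max (0 - -M) 0 :=
    volume_real_eq_of_Ioo_subset_of_subset_Icc
      (fun x hx => ⟨hx.2, hx.1.le, hx.2.le.trans hM⟩)
      (fun x hx => ⟨hx.2.1, le_of_lt hx.1⟩)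
  rw [integral_sub ((integrable_const 1).indicator hL)
      ((integrable_const 1).indicator measurableSet_Iio),
    integral_indicator_one hL, integral_indicator_one measurableSet_Iio,
    measureReal_restrict_apply hL, measureReal_restrict_apply measurableSet_Iio, hL', hneg,
    max_eq_left (by linarith [hq.1]), max_eq_left (by linarith)]
  ring

/-- The paper's `h_α`. -/
def distortion (α s : ℝ) : ℝ := max ((s - (1 - α)) / α) 0

theorem distortion_one {α : ℝ} (hα : α ≠ 0) : distortion α 1 = 1 := by
  simp [distortion, hα]

theorem distortion_zero {α : ℝ} (hα₀ : 0 < α) (hα₁ : α ≤ 1) : distortion α 0 = 0 :=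
  max_eq_right (div_nonpos_of_nonpos_of_nonneg (by linarith) hα₀.le)

theorem setIntegral_Ioc_indicator_Ici {α s : ℝ} (hα : 0 < α) (hs : s ≤ 1) :
    ∫ β in Ioc 0 α, (Ici (1 - s)).indicator 1 β = α * distortion α s := by
  have hvol : volume.real (Ici (1 - s) ∩ Ioc 0 α) = max (α - (1 - s)) 0 :=
    volume_real_eq_of_Ioo_subset_of_subset_Icc
      (fun x hx => ⟨mem_Ici.2 hx.1.le, by linarith [hx.1], hx.2.le⟩)
      (fun x hx => ⟨hx.1, hx.2.2⟩)
  rw [integral_indicator_one measurableSet_Ici, measureReal_restrict_apply measurableSet_Ici, hvol,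
    distortion, mul_max_of_nonneg _ _ hα.le, mul_div_cancel₀ _ hα.ne', mul_zero]
  ring_nf

structure IsBoundedSurvival (G : ℝ → ℝ) (M : ℝ) : Prop where
  antitone : Antitone G
  eq_one_of_lt : ∀ x < -M, G x = 1
  eq_zero_of_le : ∀ x, M ≤ x → G x = 0

namespace IsBoundedSurvival

variable {G : ℝ → ℝ} {M : ℝ}

theorem le_one (hG : IsBoundedSurvival G M) (x : ℝ) : G x ≤ 1 := by
  obtain ⟨y, hy⟩ := exists_lt (min x (-M))
  rw [← hG.eq_one_of_lt y (hy.trans_le (min_le_right _ _))]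
  exact hG.antitone (hy.le.trans (min_le_left _ _))

theorem nonneg (hG : IsBoundedSurvival G M) : 0 ≤ M :=
  not_lt.1 fun hM => by
    have h := hG.eq_one_of_lt M (by linarith)
    rw [hG.eq_zero_of_le M le_rfl] at h
    exact zero_ne_one h

theorem neg_le_of_lt (hG : IsBoundedSurvival G M) {x t : ℝ} (ht : t ≤ 1) (hx : G x < t) :
    -M ≤ x :=
  not_lt.1 fun hxM => by linarith [hG.eq_one_of_lt x hxM]

theorem sInf_setOf_lt_mem_Icc (hG : IsBoundedSurvival G M) {t : ℝ} (ht₀ : 0 < t)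
    (ht₁ : t ≤ 1) :
    sInf {x | G x < t} ∈ Icc (-M) M := by
  have hM : G M < t := by rwa [hG.eq_zero_of_le M le_rfl]
  exact ⟨le_csInf ⟨M, hM⟩ fun x => hG.neg_le_of_lt ht₁,
    csInf_le ⟨-M, fun x => hG.neg_le_of_lt ht₁⟩ hM⟩

theorem setIntegral_Icc_indicator_setOf_le (hG : IsBoundedSurvival G M) {t : ℝ} (ht₀ : 0 < t)
    (ht₁ : t ≤ 1) :
    ∫ x in Icc (-M) M, ({x | t ≤ G x}.indicator 1 x - (Iio 0).indicator 1 x) =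
      sInf {x | G x < t} := by
  have hbdd : BddBelow {x | G x < t} := ⟨-M, fun x => hG.neg_le_of_lt ht₁⟩
  refine setIntegral_Icc_indicator_sub_indicator_Iio
    (measurableSet_le measurable_const hG.antitone.measurable)
    (hG.sInf_setOf_lt_mem_Icc ht₀ ht₁)
    (fun x hx => show t ≤ G x from not_lt.1 fun hlt => (csInf_le hbdd hlt).not_gt hx)
    fun x hx => ?_
  have hM : G M < t := by rwa [hG.eq_zero_of_le M le_rfl]
  exact le_csInf ⟨M, hM⟩ fun y hy => not_lt.1 fun hyx =>
    (hy.trans_le' (hG.antitone hyx.le)).not_ge hx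

theorem distortion_sub_indicator_eq_setIntegral (hG : IsBoundedSurvival G M) {α : ℝ}
    (hα : 0 < α) (x : ℝ) :
    distortion α (G x) - (Iio 0).indicator 1 x =
      1 / α * ∫ β in Ioc 0 α,
        ({y | 1 - β ≤ G y}.indicator 1 x - (Iio 0).indicator 1 x) := by
  have hsection : ∀ β, {y | 1 - β ≤ G y}.indicator (1 : ℝ → ℝ) x =
      (Ici (1 - G x)).indicator 1 β := by
    intro β
    simp only [indicator_apply, mem_ofPred_eq, mem_Ici, sub_le_comm, Pi.one_apply]
  simp only [hsection]
  rw [integral_sub ((integrable_const 1).indicator measurableSet_Ici) (integrable_const _),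
    setIntegral_Ioc_indicator_Ici hα (hG.le_one x)]
  rw [setIntegral_const, Real.volume_real_Ioc, sub_zero, max_eq_left hα.le, smul_eq_mul]
  field_simp

theorem distortion_sub_indicator_eq_zero (hG : IsBoundedSurvival G M) {α : ℝ} (hα₀ : 0 < α)
    (hα₁ : α ≤ 1) {x : ℝ} (hx : x ∉ Icc (-M) M) :
    distortion α (G x) - (Iio 0).indicator 1 x = 0 := by
  rcases not_and_or.1 hx with hx | hx
  · have hx₀ : x ∈ Iio 0 := show x < 0 by linarith [hG.nonneg]
    rw [hG.eq_one_of_lt x (not_le.1 hx), distortion_one hα₀.ne', indicator_of_mem hx₀,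
      Pi.one_apply, sub_self]
  · have hx₀ : x ∉ Iio 0 := show ¬ x < 0 by linarith [hG.nonneg]
    rw [hG.eq_zero_of_le x (not_le.1 hx).le, distortion_zero hα₀ hα₁,
      indicator_of_notMem hx₀, sub_zero]

theorem integral_distortion_eq_average_sInf (hG : IsBoundedSurvival G M) {α : ℝ}
    (hα₀ : 0 < α) (hα₁ : α < 1) :
    (∫ x in Ioi 0, distortion α (G x)) + ∫ x in Iio 0, (distortion α (G x) - 1) =
      1 / α * ∫ β in 0..α, sInf {x | G x < 1 - β} := by
  set φ : ℝ → ℝ := fun x => distortion α (G x) - (Iio 0).indicator 1 x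
  set ψ : ℝ → ℝ → ℝ := fun x β =>
    {y | 1 - β ≤ G y}.indicator 1 x - (Iio 0).indicator 1 x
  have hφ_zero : ∀ x ∉ Icc (-M) M, φ x = 0 := fun x =>
    hG.distortion_sub_indicator_eq_zero hα₀ hα₁.le
  have hψ : Integrable (Function.uncurry ψ)
      ((volume.restrict (Icc (-M) M)).prod (volume.restrict (Ioc 0 α))) := by
    have hA : MeasurableSet {p : ℝ × ℝ | 1 - p.2 ≤ G p.1} :=
      measurableSet_le (by fun_prop) (hG.antitone.measurable.comp measurable_fst)
    exact ((integrable_const 1).indicator hA).sub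
      ((integrable_const 1).indicator (measurableSet_Iio.preimage measurable_fst))
  have hφ : Integrable φ := by
    refine IntegrableOn.integrable_of_forall_notMem_eq_zero ?_ hφ_zero
    exact (hψ.integral_prod_left.const_mul (1 / α)).congr
      (ae_of_all _ fun x => (hG.distortion_sub_indicator_eq_setIntegral hα₀ x).symm)
  calc _ = ∫ x, φ x := integral_Ioi_add_integral_Iio_sub_one hφ
    _ = ∫ x in Icc (-M) M, φ x := (setIntegral_eq_integral_of_forall_compl_eq_zero hφ_zero).symm
    _ = 1 / α * ∫ x in Icc (-M) M, ∫ β in Ioc 0 α, ψ x β := by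
      simp_rw [φ, hG.distortion_sub_indicator_eq_setIntegral hα₀]
      exact integral_const_mul _ _
    _ = 1 / α * ∫ β in Ioc 0 α, ∫ x in Icc (-M) M, ψ x β := by
      rw [integral_integral_swap hψ]
    _ = 1 / α * ∫ β in Ioc 0 α, sInf {x | G x < 1 - β} := by
      congr 1
      refine setIntegral_congr_fun measurableSet_Ioc fun β hβ => ?_
      exact hG.setIntegral_Icc_indicator_setOf_le (by linarith [hβ.2]) (by linarith [hβ.1])
    _ = _ := by rw [intervalIntegral.integral_of_le hα₀.le]

end IsBoundedSurvival

theorem IsCapacity.isBoundedSurvival {Ω : Type*} [m : MeasurableSpace Ω] {ν : Set Ω → ℝ}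
    (hν : IsCapacity m ν) {X : Ω → ℝ} (hX : BddMeas m X) :
    ∃ M, IsBoundedSurvival (fun x => ν {ω | x < X ω}) M := by
  obtain ⟨hν₀, hν₁, hmono⟩ := hν
  obtain ⟨hXm, M, hM⟩ := hX
  refine ⟨M, fun x y hxy => ?_, fun x hx => ?_, fun x hx => ?_⟩
  · exact hmono _ _ (measurableSet_lt measurable_const hXm) (measurableSet_lt measurable_const hXm)
      fun ω hω => hxy.trans_lt hω
  · have hall : {ω | x < X ω} = univ :=
      eq_univ_of_forall fun ω => show x < X ω by linarith [neg_abs_le (X ω), hM ω]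
    simp only [hall, hν₁]
  · have hnone : {ω | x < X ω} = ∅ :=
      eq_empty_of_forall_notMem fun ω hω => by linarith [le_abs_self (X ω), hM ω, hω.out]
    simp only [hnone, hν₀]

/-- the Choquet integral with respect to the distorted capacity
`h_α ∘ ν` equals the average of the ν-quantiles below level α
(Proposition `prop:quant`, second part). -/
theorem stmt18 {Ω : Type*} [F : MeasurableSpace Ω] (ν : Set Ω → ℝ)
    (hν : IsContinuousCapacity F ν) (X : Ω → ℝ) (hX : BddMeas F X)
    (α : ℝ) (hα0 : 0 < α) (hα1 : α < 1) :
    (∫ x in Set.Ioi (0:ℝ), max ((ν {ω | x < X ω} - (1 - α)) / α) 0) +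
      (∫ x in Set.Iio (0:ℝ), (max ((ν {ω | x < X ω} - (1 - α)) / α) 0 - 1)) =
    (1 / α) * ∫ β in (0:ℝ)..α, capQuantile ν X β := by
  obtain ⟨M, hG⟩ := hν.1.isBoundedSurvival hX
  exact hG.integral_distortion_eq_average_sInf hα0 hα1

end
end
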